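/- arXiv:cs/0610131 — 3 statements merged into one kernel-verified Lean document; each statement's English description precedes it below -/
import Mathlib

section
/- On a heterogeneous star platform under the bidirectional one-port model, given the imbalance δ_i of each worker (with Σ_i δ_i = 0), the redistribution schedule that orders the sending workers (those with δ_i > 0) by non-decreasing values of their per-task communication time c_i, orders the receiving workers (those with δ_i < 0) by non-increasing values of c_i, and performs every communication as soon as possible, achieves a makespan less than or equal to the makespan of any other valid redistribution schedule; i.e., this ordering is optimal. -/
open scoped Classical

/-- A pure redistribution schedule on a heterogeneous star platform with `m`
workers, master `P₀`, and per-task communication time `c i` on the link of worker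
`i` (computations are neglected).  Worker `i` has imbalance `δ i` (with
`∑ i, δ i = 0`): if `δ i > 0` it sends `δ i` unit tasks to the master, and if
`δ i < 0` it receives `-δ i` unit tasks from the master.  Communication follows
the bidirectional one-port model: the master receives from at most one worker and
sends to at most one worker at any instant (but may do both simultaneously), and
a task can only be emitted by the master after it has been completely received. -/
structure RedistSchedule (m : ℕ) (c : Fin m → ℝ) (δ : Fin m → ℤ) where
  /-- number of worker→master transfers -/
  nRecv : ℕ
  /-- number of master→worker transfers -/
  nSend : ℕ
  /-- sender of the `k`-th worker→master transfer -/
  rsrc : Fin nRecv → Fin m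
  /-- start time of the `k`-th worker→master transfer (it lasts `c (rsrc k)`) -/
  rstart : Fin nRecv → ℝ
  /-- destination of the `k`-th master→worker transfer -/
  sdst : Fin nSend → Fin m
  /-- start time of the `k`-th master→worker transfer (it lasts `c (sdst k)`) -/
  sstart : Fin nSend → ℝ
  rstart_nonneg : ∀ k, 0 ≤ rstart k
  sstart_nonneg : ∀ k, 0 ≤ sstart k
  /-- every overloaded worker sends exactly its excess `δ i` -/
  send_counts : ∀ i, (Finset.univ.filter (fun k => rsrc k = i)).card = (δ i).toNat
  /-- every underloaded worker receives exactly its deficit `-δ i` -/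
  recv_counts : ∀ i, (Finset.univ.filter (fun k => sdst k = i)).card = (-δ i).toNat
  /-- the master receives from at most one worker at a time -/
  oneport_in : ∀ k k', k ≠ k' →
    rstart k + c (rsrc k) ≤ rstart k' ∨ rstart k' + c (rsrc k') ≤ rstart k
  /-- the master sends to at most one worker at a time -/
  oneport_out : ∀ k k', k ≠ k' →
    sstart k + c (sdst k) ≤ sstart k' ∨ sstart k' + c (sdst k') ≤ sstart k
  /-- the master can only forward tasks it has completely received -/
  master_avail : ∀ t : ℝ,
    (Finset.univ.filter (fun k => sstart k ≤ t)).card ≤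
      (Finset.univ.filter (fun k => rstart k + c (rsrc k) ≤ t)).card

/-- The redistribution completes by time `M`: all master→worker transfers end by
`M`. -/
def CompletesBy {m : ℕ} {c : Fin m → ℝ} {δ : Fin m → ℤ}
    (σ : RedistSchedule m c δ) (M : ℝ) : Prop :=
  ∀ k, σ.sstart k + c (σ.sdst k) ≤ M

/-- packing of disjoint intervals -/
lemma packing {ι : Type*} [DecidableEq ι] (s ℓ : ι → ℝ) (a b : ℝ) (F : Finset ι)
    (hne : F.Nonempty)
    (hpos : ∀ k ∈ F, 0 < ℓ k)
    (hdis : ∀ k ∈ F, ∀ k' ∈ F, k ≠ k' → s k + ℓ k ≤ s k' ∨ s k' + ℓ k' ≤ s k)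
    (ha : ∀ k ∈ F, a ≤ s k) (hb : ∀ k ∈ F, s k + ℓ k ≤ b) :
    a + ∑ k ∈ F, ℓ k ≤ b := by
  classical
  suffices H : ∀ F : Finset ι, F.Nonempty →
      (∀ k ∈ F, 0 < ℓ k) →
      (∀ k ∈ F, ∀ k' ∈ F, k ≠ k' → s k + ℓ k ≤ s k' ∨ s k' + ℓ k' ≤ s k) →
      (∀ k ∈ F, a ≤ s k) → ∀ b : ℝ, (∀ k ∈ F, s k + ℓ k ≤ b) →
      a + ∑ k ∈ F, ℓ k ≤ b by
    exact H F hne hpos hdis ha b hb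
  clear hne hpos hdis ha hb F b
  intro F
  induction F using Finset.strongInduction with
  | _ F ih =>
  intro hne hpos hdis ha b hb
  obtain ⟨km, hkm, hmax⟩ := F.exists_max_image s hne
  rcases (F.erase km).eq_empty_or_nonempty with hrest | hrest
  · have hF : F = {km} := by
      rcases (Finset.erase_eq_empty_iff F km).mp hrest with h | h
      · exact absurd h (Finset.nonempty_iff_ne_empty.mp hne)
      · exact h
    subst hF
    rw [Finset.sum_singleton]
    have := ha km (by simp)
    have := hb km (by simp)
    linarith
  · have hsub : F.erase km ⊂ F := Finset.erase_ssubset hkm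
    have hends : ∀ k ∈ F.erase km, s k + ℓ k ≤ s km := by
      intro k hk
      have hkF := Finset.mem_of_mem_erase hk
      have hkne := Finset.ne_of_mem_erase hk
      rcases hdis k hkF km hkm hkne with h | h
      · exact h
      · exfalso
        have h1 := hmax k hkF
        have h2 := hpos km hkm
        linarith
    have hrec := ih (F.erase km) hsub hrest
      (fun k hk => hpos k (Finset.mem_of_mem_erase hk))
      (fun k hk k' hk' => hdis k (Finset.mem_of_mem_erase hk) k' (Finset.mem_of_mem_erase hk'))
      (fun k hk => ha k (Finset.mem_of_mem_erase hk))
      (s km) hends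
    have hsum : ∑ k ∈ F.erase km, ℓ k + ℓ km = ∑ k ∈ F, ℓ k := Finset.sum_erase_add F ℓ hkm
    have := hb km hkm
    linarith

/-- sum of the `card t` smallest elements of a sorted list bounds sums of submultisets -/
lemma minsum : ∀ (l : List ℝ), l.Pairwise (· ≤ ·) → ∀ (t : Multiset ℝ), t ≤ ↑l →
    (l.take (Multiset.card t)).sum ≤ t.sum := by
  intro l
  induction l with
  | nil =>
    intro _ t ht
    have : t = 0 := by simpa using ht
    simp [this]
  | cons a l ih =>
    intro hsort t ht
    have hs' : l.Pairwise (· ≤ ·) := hsort.of_cons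
    have ha : ∀ x ∈ l, a ≤ x := fun x hx => List.rel_of_pairwise_cons hsort hx
    by_cases hmem : a ∈ t
    · have h1 : t.erase a ≤ ↑l := by
        have := Multiset.erase_le_erase a ht
        rwa [show ((a :: l : List ℝ) : Multiset ℝ) = a ::ₘ ↑l from rfl,
          Multiset.erase_cons_head] at this
      have hpos : 0 < Multiset.card t := Multiset.card_pos_iff_exists_mem.mpr ⟨a, hmem⟩
      have hcard : Multiset.card t = Multiset.card (t.erase a) + 1 := by
        rw [Multiset.card_erase_of_mem hmem, Nat.pred_eq_sub_one]; omega
      have hsum : t.sum = a + (t.erase a).sum := by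
        rw [← Multiset.sum_cons, Multiset.cons_erase hmem]
      have := ih hs' (t.erase a) h1
      rw [hcard, List.take_succ_cons, List.sum_cons, hsum]
      linarith
    · have h1 : t ≤ ↑l := by
        rw [Multiset.le_iff_count] at ht ⊢
        intro x
        have hx := ht x
        rcases eq_or_ne x a with rfl | hne
        · simp [Multiset.count_eq_zero_of_notMem hmem]
        · rwa [show ((a :: l : List ℝ) : Multiset ℝ) = a ::ₘ ↑l from rfl,
            Multiset.count_cons_of_ne hne] at hx
      rcases Nat.eq_zero_or_pos (Multiset.card t) with h0 | hpos
      · have : t = 0 := Multiset.card_eq_zero.mp h0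
        simp [this, h0]
      · obtain ⟨j, hj⟩ : ∃ j, Multiset.card t = j + 1 := ⟨Multiset.card t - 1, by omega⟩
        have hlen : Multiset.card t ≤ l.length := by
          have := Multiset.card_le_card h1; simpa using this
        have IH := ih hs' t h1
        have h2 : (l.take (j+1)).sum = (l.take j).sum + l[j] :=
          List.sum_take_succ _ _ (by omega)
        have h3 : a ≤ l[j] := ha _ (List.getElem_mem (by omega))
        rw [hj, List.take_succ_cons, List.sum_cons]
        rw [hj] at IH
        linarith

lemma exists_min_subset {ι : Type*} [DecidableEq ι] (s : Finset ι) (f : ι → ℝ) :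
    ∀ n, n ≤ s.card → ∃ F, F ⊆ s ∧ F.card = n ∧ ∀ k ∈ F, ∀ k' ∈ s, k' ∉ F → f k ≤ f k' := by
  intro n
  induction n with
  | zero => intro _; exact ⟨∅, by simp, by simp, by simp⟩
  | succ n ihn =>
    intro hn
    obtain ⟨F, hFs, hcard, hmin⟩ := ihn (by omega)
    have hne : (s \ F).Nonempty := by
      rw [← Finset.card_pos, Finset.card_sdiff_of_subset hFs]; omega
    obtain ⟨k0, hk0, hmin0⟩ := (s \ F).exists_min_image f hne
    have hk0s : k0 ∈ s := (Finset.mem_sdiff.mp hk0).1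
    have hk0F : k0 ∉ F := (Finset.mem_sdiff.mp hk0).2
    refine ⟨insert k0 F, Finset.insert_subset hk0s hFs, by rw [Finset.card_insert_of_notMem hk0F, hcard], ?_⟩
    intro k hk k' hk' hk'F
    have hk'F2 : k' ∉ F := fun h => hk'F (Finset.mem_insert_of_mem h)
    rcases Finset.mem_insert.mp hk with rfl | hkF
    · exact hmin0 k' (Finset.mem_sdiff.mpr ⟨hk', hk'F2⟩)
    · exact hmin k hkF k' hk' hk'F2

lemma sum_take_mono (l : List ℝ) (h : ∀ x ∈ l, 0 ≤ x) {a b : ℕ} (hab : a ≤ b) :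
    (l.take a).sum ≤ (l.take b).sum := by
  have he : l.take b = l.take a ++ (l.drop a).take (b - a) := by
    rw [← List.take_add]; congr 1; omega
  rw [he, List.sum_append]
  have : 0 ≤ ((l.drop a).take (b - a)).sum :=
    List.sum_nonneg (fun x hx => h x (List.mem_of_mem_drop (List.mem_of_mem_take hx)))
  linarith
open scoped Classical

lemma count_map_val {ι α : Type*} [DecidableEq α] (s : Finset ι) (g : ι → α) (i : α) :
    Multiset.count i (Multiset.map g s.val) = (s.filter fun k => g k = i).card := by
  rw [Multiset.count_map, Finset.card_def, Finset.filter_val]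
  congr 1
  exact Multiset.filter_congr (fun x _ => eq_comm)

lemma card_filter_get {α : Type*} [DecidableEq α] (l : List α) (i : α) :
    (Finset.univ.filter fun k : Fin l.length => l.get k = i).card = l.count i := by
  have h : Multiset.map l.get (Finset.univ : Finset (Fin l.length)).val = ↑l := by
    rw [Fin.univ_def]
    show Multiset.map l.get ↑(List.finRange l.length) = ↑l
    rw [Multiset.map_coe, List.map_get_finRange]
  rw [← count_map_val, h, Multiset.coe_count]

lemma map_univ_eq_coe_list {n : ℕ} {α : Type*} [DecidableEq α] (g : Fin n → α) (l : List α)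
    (h : ∀ i, (Finset.univ.filter fun k => g k = i).card = l.count i) :
    Multiset.map g (Finset.univ : Finset (Fin n)).val = ↑l := by
  rw [Multiset.ext]
  intro a
  rw [count_map_val, Multiset.coe_count, h]
open scoped Classical

noncomputable section
namespace RedistAux

variable (m : ℕ) (c : Fin m → ℝ) (δ : Fin m → ℤ)

/-- sorted list of senders (by nondecreasing `c`), with multiplicities -/
def Sl : List (Fin m) :=
  ((List.finRange m).flatMap fun i => List.replicate (δ i).toNat i).mergeSort
    fun a b => decide (c a ≤ c b)

/-- sorted list of receivers (by nonincreasing `c`), with multiplicities -/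
def Rl : List (Fin m) :=
  ((List.finRange m).flatMap fun i => List.replicate (-δ i).toNat i).mergeSort
    fun a b => decide (c b ≤ c a)

lemma count_base (f : Fin m → ℕ) (i : Fin m) :
    ((List.finRange m).flatMap fun i' => List.replicate (f i') i').count i = f i := by
  rw [List.count_flatMap]
  have h1 : (List.count i ∘ fun i' => List.replicate (f i') i') =
      fun i' => if i' = i then f i' else 0 := by
    funext i'
    simp [List.count_replicate]
  rw [h1, ← Fin.sum_univ_def]
  simp

lemma length_base (f : Fin m → ℕ) :
    ((List.finRange m).flatMap fun i' => List.replicate (f i') i').length = ∑ i, f i := by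
  rw [List.length_flatMap, ← Fin.sum_univ_def]
  simp

lemma count_Sl (i : Fin m) : (Sl m c δ).count i = (δ i).toNat := by
  rw [Sl, (List.mergeSort_perm _ _).count_eq, count_base]

lemma count_Rl (i : Fin m) : (Rl m c δ).count i = (-δ i).toNat := by
  rw [Rl, (List.mergeSort_perm _ _).count_eq, count_base]

lemma length_Sl : (Sl m c δ).length = ∑ i, (δ i).toNat := by
  rw [Sl, List.length_mergeSort, length_base]

lemma length_Rl : (Rl m c δ).length = ∑ i, (-δ i).toNat := by
  rw [Rl, List.length_mergeSort, length_base]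

lemma length_Rl_eq (hδ : ∑ i, δ i = 0) : (Rl m c δ).length = (Sl m c δ).length := by
  rw [length_Rl, length_Sl]
  have : ((∑ i, (-δ i).toNat : ℕ) : ℤ) = ((∑ i, (δ i).toNat : ℕ) : ℤ) := by
    push_cast
    have h : ∀ i : Fin m, ((δ i).toNat : ℤ) - ((-δ i).toNat : ℤ) = δ i := by
      intro i; rw [Int.toNat_sub_toNat_neg]
    calc (∑ i, ((-δ i).toNat : ℤ)) = ∑ i, (((δ i).toNat : ℤ) - δ i) := by
          refine Finset.sum_congr rfl fun i _ => ?_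
          have := h i; linarith
      _ = ∑ i, ((δ i).toNat : ℤ) := by rw [Finset.sum_sub_distrib, hδ, sub_zero]
  exact_mod_cast this

lemma sorted_Sl : (Sl m c δ).Pairwise fun a b => c a ≤ c b := by
  have := List.pairwise_mergeSort (le := fun a b : Fin m => decide (c a ≤ c b))
    (fun a b d hab hbd => by simp only [decide_eq_true_eq] at *; exact le_trans hab hbd)
    (fun a b => by simpa using le_total (c a) (c b))
    ((List.finRange m).flatMap fun i => List.replicate (δ i).toNat i)
  simpa [Sl] using this

lemma sorted_Rl : (Rl m c δ).Pairwise fun a b => c b ≤ c a := by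
  have := List.pairwise_mergeSort (le := fun a b : Fin m => decide (c b ≤ c a))
    (fun a b d hab hbd => by simp only [decide_eq_true_eq] at *; exact le_trans hbd hab)
    (fun a b => by simpa using le_total (c b) (c a))
    ((List.finRange m).flatMap fun i => List.replicate (-δ i).toNat i)
  simpa [Rl] using this

/-- start time of `k`-th reception (also: `rS (k+1)` is the end of the `k`-th reception) -/
def rS (k : ℕ) : ℝ := (((Sl m c δ).map c).take k).sum

/-- communication time of `k`-th emission -/
def cR (k : ℕ) : ℝ := ((Rl m c δ).map c).getD k 0

/-- emission start times (ASAP) -/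
def sst : ℕ → ℝ
  | 0 => rS m c δ 1
  | k+1 => max (sst k + cR m c δ k) (rS m c δ (k+2))

end RedistAux
end

noncomputable section
namespace RedistAux
variable (m : ℕ) (c : Fin m → ℝ) (δ : Fin m → ℤ)

lemma rS_zero : rS m c δ 0 = 0 := by simp [rS]

lemma mem_map_c_nonneg (hc : ∀ i, 0 < c i) : ∀ x ∈ (Sl m c δ).map c, (0:ℝ) ≤ x := by
  intro x hx
  obtain ⟨i, _, rfl⟩ := List.mem_map.mp hx
  exact (hc i).le

lemma mem_map_c_nonneg_R (hc : ∀ i, 0 < c i) : ∀ x ∈ (Rl m c δ).map c, (0:ℝ) ≤ x := by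
  intro x hx
  obtain ⟨i, _, rfl⟩ := List.mem_map.mp hx
  exact (hc i).le

lemma rS_mono (hc : ∀ i, 0 < c i) {a b : ℕ} (hab : a ≤ b) : rS m c δ a ≤ rS m c δ b :=
  sum_take_mono _ (mem_map_c_nonneg m c δ hc) hab

lemma rS_nonneg (hc : ∀ i, 0 < c i) (k : ℕ) : 0 ≤ rS m c δ k := by
  have := rS_mono m c δ hc (Nat.zero_le k)
  rwa [rS_zero] at this

lemma rS_succ (k : ℕ) (hk : k < (Sl m c δ).length) :
    rS m c δ (k + 1) = rS m c δ k + c ((Sl m c δ).get ⟨k, hk⟩) := by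
  rw [rS, rS, List.sum_take_succ _ k (by simpa using hk)]
  congr 1
  simp [List.getElem_map]

lemma cR_eq (k : ℕ) (hk : k < (Rl m c δ).length) :
    cR m c δ k = c ((Rl m c δ).get ⟨k, hk⟩) := by
  rw [cR, List.getD_eq_getElem _ _ (by simpa using hk)]
  simp [List.getElem_map]

lemma cR_nonneg (hc : ∀ i, 0 < c i) (k : ℕ) : 0 ≤ cR m c δ k := by
  by_cases hk : k < (Rl m c δ).length
  · rw [cR_eq m c δ k hk]; exact (hc _).le
  · rw [cR, List.getD_eq_default _ _ (by simpa using not_lt.mp hk)]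

lemma rS_le_sst (k : ℕ) : rS m c δ (k + 1) ≤ sst m c δ k := by
  cases k with
  | zero => exact le_of_eq rfl
  | succ n => exact le_max_right _ _

lemma sst_nonneg (hc : ∀ i, 0 < c i) (k : ℕ) : 0 ≤ sst m c δ k :=
  le_trans (rS_nonneg m c δ hc (k+1)) (rS_le_sst m c δ k)

lemma sst_chain (hc : ∀ i, 0 < c i) : ∀ k' k : ℕ, k < k' → sst m c δ k + cR m c δ k ≤ sst m c δ k' := by
  intro k'
  induction k' with
  | zero => intro k hk; omega
  | succ n ih =>
    intro k hk
    rcases Nat.lt_or_ge k n with h | h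
    · have h1 := ih k h
      have h2 : sst m c δ n ≤ sst m c δ (n+1) := by
        have := le_max_left (sst m c δ n + cR m c δ n) (rS m c δ (n+2))
        have h3 := cR_nonneg m c δ hc n
        calc sst m c δ n ≤ sst m c δ n + cR m c δ n := by linarith
          _ ≤ _ := le_max_left _ _
      linarith
    · have : k = n := by omega
      subst this
      exact le_max_left _ _

lemma sst_mono (hc : ∀ i, 0 < c i) {a b : ℕ} (hab : a ≤ b) : sst m c δ a ≤ sst m c δ b := by
  rcases Nat.eq_or_lt_of_le hab with rfl | h
  · exact le_refl _
  · have h1 := sst_chain m c δ hc b a h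
    have h2 := cR_nonneg m c δ hc a
    linarith

end RedistAux
end

noncomputable section
namespace RedistAux
variable (m : ℕ) (c : Fin m → ℝ) (δ : Fin m → ℤ)

lemma lower_bound (hc : ∀ i, 0 < c i) (hδ : ∑ i, δ i = 0)
    (σ' : RedistSchedule m c δ) (M : ℝ) (hM : CompletesBy σ' M)
    (j : ℕ) (hj : j < (Sl m c δ).length) :
    rS m c δ (j + 1) + (((Rl m c δ).map c).drop j).sum ≤ M := by
  set N := (Sl m c δ).length with hN
  -- the number of receptions and emissions is N
  have hNR : σ'.nRecv = N := by
    have h1 : (Finset.univ : Finset (Fin σ'.nRecv)).card =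
        ∑ i, (Finset.univ.filter fun k => σ'.rsrc k = i).card :=
      Finset.card_eq_sum_card_fiberwise (fun x _ => Finset.mem_univ _)
    simp only [σ'.send_counts] at h1
    rw [Finset.card_univ, Fintype.card_fin] at h1
    rw [h1, hN, length_Sl]
  have hNS : σ'.nSend = N := by
    have h1 : (Finset.univ : Finset (Fin σ'.nSend)).card =
        ∑ i, (Finset.univ.filter fun k => σ'.sdst k = i).card :=
      Finset.card_eq_sum_card_fiberwise (fun x _ => Finset.mem_univ _)
    simp only [σ'.recv_counts] at h1
    rw [Finset.card_univ, Fintype.card_fin] at h1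
    rw [h1, hN, ← length_Rl, length_Rl_eq m c δ hδ]
  -- multiset identities
  have hmsS : Multiset.map σ'.rsrc (Finset.univ : Finset (Fin σ'.nRecv)).val = ↑(Sl m c δ) :=
    map_univ_eq_coe_list _ _ (fun i => by rw [σ'.send_counts i, count_Sl])
  have hmsR : Multiset.map σ'.sdst (Finset.univ : Finset (Fin σ'.nSend)).val = ↑(Rl m c δ) :=
    map_univ_eq_coe_list _ _ (fun i => by rw [σ'.recv_counts i, count_Rl])
  have hSsorted : ((Sl m c δ).map c).Pairwise (· ≤ ·) :=
    List.pairwise_map.mpr (sorted_Sl m c δ)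
  have hRrev : (((Rl m c δ).map c).reverse).Pairwise (· ≤ ·) :=
    List.pairwise_reverse.mpr (List.pairwise_map.mpr (sorted_Rl m c δ))
  -- Part A : the (j+1)-smallest reception-end time e
  obtain ⟨F, hFsub, hFcard, hFmin⟩ := exists_min_subset (Finset.univ : Finset (Fin σ'.nRecv))
    (fun k => σ'.rstart k + c (σ'.rsrc k)) (j + 1)
    (by rw [Finset.card_univ, Fintype.card_fin, hNR]; omega)
  have hFne : F.Nonempty := Finset.card_pos.mp (by rw [hFcard]; omega)
  obtain ⟨km, hkmF, hkmax⟩ := F.exists_max_image (fun k => σ'.rstart k + c (σ'.rsrc k)) hFne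
  set e := σ'.rstart km + c (σ'.rsrc km) with he
  have hpackF : (0:ℝ) + ∑ k ∈ F, c (σ'.rsrc k) ≤ e :=
    packing σ'.rstart (fun k => c (σ'.rsrc k)) 0 e F hFne
      (fun k _ => hc _)
      (fun k hk k' hk' hne => σ'.oneport_in k k' hne)
      (fun k _ => σ'.rstart_nonneg k)
      hkmax
  -- min-sum for the senders
  have h_eS : rS m c δ (j + 1) ≤ e := by
    set t : Multiset ℝ := Multiset.map (fun k => c (σ'.rsrc k)) F.val with ht
    have htcard : Multiset.card t = j + 1 := by
      rw [ht, Multiset.card_map, ← Finset.card_def, hFcard]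
    have htle : t ≤ ↑((Sl m c δ).map c) := by
      have h1 : Multiset.map σ'.rsrc F.val ≤
          Multiset.map σ'.rsrc (Finset.univ : Finset (Fin σ'.nRecv)).val :=
        Multiset.map_le_map (Finset.val_le_iff.mpr hFsub)
      rw [hmsS] at h1
      have h2 := Multiset.map_le_map (f := c) h1
      rw [Multiset.map_coe] at h2
      have h3 : Multiset.map c (Multiset.map σ'.rsrc F.val) = t := by
        rw [ht, Multiset.map_map]; rfl
      rw [← h3]; exact h2
    have hminS := minsum ((Sl m c δ).map c) hSsorted t htle
    rw [htcard] at hminS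
    have hts : t.sum = ∑ k ∈ F, c (σ'.rsrc k) := (Finset.sum_eq_multiset_sum F _).symm
    rw [rS]
    calc (((Sl m c δ).map c).take (j+1)).sum ≤ t.sum := hminS
      _ = ∑ k ∈ F, c (σ'.rsrc k) := hts
      _ ≤ e := by linarith
  -- Part B : at most j emissions start before e
  set T := Finset.univ.filter (fun k : Fin σ'.nSend => σ'.sstart k < e) with hT
  have hTcard : T.card ≤ j := by
    rcases T.eq_empty_or_nonempty with h | h
    · simp [h]
    · obtain ⟨k2, hk2, hmax2⟩ := T.exists_max_image σ'.sstart h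
      have hk2e : σ'.sstart k2 < e := (Finset.mem_filter.mp hk2).2
      have hmav := σ'.master_avail (σ'.sstart k2)
      have hsubT : T ⊆ Finset.univ.filter (fun k => σ'.sstart k ≤ σ'.sstart k2) := by
        intro k hk
        exact Finset.mem_filter.mpr ⟨Finset.mem_univ _, hmax2 k hk⟩
      have h2 : (Finset.univ.filter fun k : Fin σ'.nRecv =>
          σ'.rstart k + c (σ'.rsrc k) ≤ σ'.sstart k2) ⊆ F.erase km := by
        intro k hk
        have hke : σ'.rstart k + c (σ'.rsrc k) ≤ σ'.sstart k2 := (Finset.mem_filter.mp hk).2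
        have hkF : k ∈ F := by
          by_contra hkF
          have := hFmin km hkmF k (Finset.mem_univ _) hkF
          linarith
        have hkne : k ≠ km := by
          intro hkk
          rw [hkk] at hke
          linarith
        exact Finset.mem_erase.mpr ⟨hkne, hkF⟩
      calc T.card ≤ (Finset.univ.filter fun k => σ'.sstart k ≤ σ'.sstart k2).card :=
            Finset.card_le_card hsubT
        _ ≤ (Finset.univ.filter fun k : Fin σ'.nRecv =>
              σ'.rstart k + c (σ'.rsrc k) ≤ σ'.sstart k2).card := hmav
        _ ≤ (F.erase km).card := Finset.card_le_card h2
        _ = j := by rw [Finset.card_erase_of_mem hkmF, hFcard]; omega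
  set G := Finset.univ.filter (fun k : Fin σ'.nSend => ¬ (σ'.sstart k < e)) with hG
  have hGcard : N - j ≤ G.card := by
    have hpart := Finset.card_filter_add_card_filter_not
      (s := (Finset.univ : Finset (Fin σ'.nSend))) (p := fun k => σ'.sstart k < e)
    have hcardu : (Finset.univ : Finset (Fin σ'.nSend)).card = N := by
      rw [Finset.card_univ, Fintype.card_fin, hNS]
    rw [hcardu] at hpart
    rw [← hT, ← hG] at hpart
    omega
  obtain ⟨G₀, hG0sub, hG0card⟩ := Finset.exists_subset_card_eq hGcard
  have hG0ne : G₀.Nonempty := Finset.card_pos.mp (by rw [hG0card]; omega)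
  have hG0e : ∀ k ∈ G₀, e ≤ σ'.sstart k := by
    intro k hk
    have := (Finset.mem_filter.mp (hG0sub hk)).2
    linarith [not_lt.mp this]
  have hpackG : e + ∑ k ∈ G₀, c (σ'.sdst k) ≤ M :=
    packing σ'.sstart (fun k => c (σ'.sdst k)) e M G₀ hG0ne
      (fun k _ => hc _)
      (fun k hk k' hk' hne => σ'.oneport_out k k' hne)
      hG0e
      (fun k _ => hM k)
  -- min-sum for the receivers
  have h_dR : (((Rl m c δ).map c).drop j).sum ≤ ∑ k ∈ G₀, c (σ'.sdst k) := by
    set t2 : Multiset ℝ := Multiset.map (fun k => c (σ'.sdst k)) G₀.val with ht2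
    have ht2card : Multiset.card t2 = N - j := by
      rw [ht2, Multiset.card_map, ← Finset.card_def, hG0card]
    have ht2le : t2 ≤ ↑(((Rl m c δ).map c).reverse) := by
      rw [Multiset.coe_reverse]
      have h1 : Multiset.map σ'.sdst G₀.val ≤
          Multiset.map σ'.sdst (Finset.univ : Finset (Fin σ'.nSend)).val :=
        Multiset.map_le_map (Finset.val_le_iff.mpr (hG0sub.trans (Finset.filter_subset _ _)))
      rw [hmsR] at h1
      have h2 := Multiset.map_le_map (f := c) h1
      rw [Multiset.map_coe] at h2
      have h3 : Multiset.map c (Multiset.map σ'.sdst G₀.val) = t2 := by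
        rw [ht2, Multiset.map_map]; rfl
      rw [← h3]; exact h2
    have hminR := minsum (((Rl m c δ).map c).reverse) hRrev t2 ht2le
    rw [ht2card] at hminR
    have hlen2 : ((Rl m c δ).map c).length = N := by
      rw [List.length_map, length_Rl_eq m c δ hδ]
    have htake : ((((Rl m c δ).map c).reverse).take (N - j)).sum =
        ((((Rl m c δ).map c)).drop j).sum := by
      rw [List.take_reverse, List.sum_reverse, hlen2]
      congr 2
      omega
    rw [htake] at hminR
    have hts : t2.sum = ∑ k ∈ G₀, c (σ'.sdst k) := (Finset.sum_eq_multiset_sum G₀ _).symm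
    rw [hts] at hminR
    exact hminR
  linarith

end RedistAux
end

noncomputable section
namespace RedistAux
variable (m : ℕ) (c : Fin m → ℝ) (δ : Fin m → ℤ)

lemma drop_sum_eq (k : ℕ) (hk : k < (Rl m c δ).length) :
    (((Rl m c δ).map c).drop k).sum = cR m c δ k + (((Rl m c δ).map c).drop (k+1)).sum := by
  rw [List.drop_eq_getElem_cons (l := (Rl m c δ).map c) (by simpa using hk), List.sum_cons,
    List.getElem_map, cR_eq m c δ k hk, List.get_eq_getElem]

lemma drop_sum_nonneg (hc : ∀ i, 0 < c i) (k : ℕ) :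
    0 ≤ (((Rl m c δ).map c).drop k).sum :=
  List.sum_nonneg fun x hx => mem_map_c_nonneg_R m c δ hc x (List.mem_of_mem_drop hx)

end RedistAux
end


open RedistAux

/-- **Optimality of the redistribution ordering.**  Knowing the imbalance `δ i` of
each worker, the redistribution schedule that orders the senders by
non-decreasing communication time `c i`, orders the receivers by non-increasing
communication time `c i`, and performs every communication as soon as possible,
completes no later than any other valid redistribution schedule. -/
theorem redistribution_sender_receiver_order_optimal
    (m : ℕ) (c : Fin m → ℝ) (hc : ∀ i, 0 < c i)
    (δ : Fin m → ℤ) (hδ : ∑ i, δ i = 0) :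
    ∃ σ : RedistSchedule m c δ,
      ∃ hR : σ.nRecv = ∑ i, (δ i).toNat, ∃ hE : σ.nSend = ∑ i, (δ i).toNat,
      -- the senders are ordered by non-decreasing values of `c`
      (∀ k k' : Fin σ.nRecv, k.val ≤ k'.val → c (σ.rsrc k) ≤ c (σ.rsrc k')) ∧
      -- the receivers are ordered by non-increasing values of `c`
      (∀ k k' : Fin σ.nSend, k.val ≤ k'.val → c (σ.sdst k') ≤ c (σ.sdst k)) ∧
      -- receptions at the master take place as soon as possible
      (∀ k : Fin σ.nRecv, k.val = 0 → σ.rstart k = 0) ∧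
      (∀ k : Fin σ.nRecv, ∀ h : k.val + 1 < σ.nRecv,
        σ.rstart ⟨k.val + 1, h⟩ = σ.rstart k + c (σ.rsrc k)) ∧
      -- emissions take place as soon as possible: the `k`-th emission starts
      -- exactly when the `k`-th task is available at the master and the
      -- outgoing port is free
      (∀ k : Fin σ.nSend, k.val = 0 →
        σ.sstart k = σ.rstart ⟨0, by have := k.isLt; omega⟩ +
          c (σ.rsrc ⟨0, by have := k.isLt; omega⟩)) ∧
      (∀ k : Fin σ.nSend, ∀ h : k.val + 1 < σ.nSend,
        σ.sstart ⟨k.val + 1, h⟩ = max (σ.sstart k + c (σ.sdst k))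
          (σ.rstart ⟨k.val + 1, by omega⟩ + c (σ.rsrc ⟨k.val + 1, by omega⟩))) ∧
      -- ... and it achieves a makespan no larger than that of any other
      -- valid redistribution schedule
      (∀ (σ' : RedistSchedule m c δ) (M : ℝ), CompletesBy σ' M → CompletesBy σ M) := by
  have hlen : (Rl m c δ).length = (Sl m c δ).length := length_Rl_eq m c δ hδ
  refine ⟨{
      nRecv := (Sl m c δ).length
      nSend := (Rl m c δ).length
      rsrc := fun k => (Sl m c δ).get k
      rstart := fun k => rS m c δ k.val
      sdst := fun k => (Rl m c δ).get k
      sstart := fun k => sst m c δ k.val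
      rstart_nonneg := fun k => rS_nonneg m c δ hc k.val
      sstart_nonneg := fun k => sst_nonneg m c δ hc k.val
      send_counts := fun i => by rw [card_filter_get, count_Sl]
      recv_counts := fun i => by rw [card_filter_get, count_Rl]
      oneport_in := ?_
      oneport_out := ?_
      master_avail := ?_ }, length_Sl m c δ, hlen.trans (length_Sl m c δ), ?_, ?_, ?_, ?_, ?_, ?_, ?_⟩
  · -- oneport_in
    intro k k' hne
    rcases lt_or_gt_of_ne (fun h : k.val = k'.val => hne (Fin.ext h)) with h | h
    · left
      rw [← rS_succ m c δ k.val k.isLt]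
      exact rS_mono m c δ hc h
    · right
      rw [← rS_succ m c δ k'.val k'.isLt]
      exact rS_mono m c δ hc h
  · -- oneport_out
    intro k k' hne
    rcases lt_or_gt_of_ne (fun h : k.val = k'.val => hne (Fin.ext h)) with h | h
    · left
      rw [← cR_eq m c δ k.val k.isLt]
      exact sst_chain m c δ hc k'.val k.val h
    · right
      rw [← cR_eq m c δ k'.val k'.isLt]
      exact sst_chain m c δ hc k.val k'.val h
  · -- master_avail
    intro t
    have h1 : (Finset.univ.filter fun k : Fin (Rl m c δ).length => sst m c δ k.val ≤ t).card ≤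
        (Finset.univ.filter fun k : Fin (Rl m c δ).length => rS m c δ (k.val + 1) ≤ t).card := by
      apply Finset.card_le_card
      intro k hk
      refine Finset.mem_filter.mpr ⟨Finset.mem_univ _, ?_⟩
      exact le_trans (rS_le_sst m c δ k.val) (Finset.mem_filter.mp hk).2
    have h2 : (Finset.univ.filter fun k : Fin (Rl m c δ).length => rS m c δ (k.val + 1) ≤ t).card =
        (Finset.univ.filter fun k : Fin (Sl m c δ).length => rS m c δ (k.val + 1) ≤ t).card := by
      rw [hlen]
    have h3 : (Finset.univ.filter fun k : Fin (Sl m c δ).length => rS m c δ (k.val + 1) ≤ t).card =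
        (Finset.univ.filter fun k : Fin (Sl m c δ).length =>
          rS m c δ k.val + c ((Sl m c δ).get k) ≤ t).card := by
      congr 1
      apply Finset.filter_congr
      intro k _
      rw [rS_succ m c δ k.val k.isLt]
    calc _ ≤ _ := h1
      _ = _ := h2
      _ = _ := h3
  · -- senders sorted
    intro k k' hkk
    rcases Nat.eq_or_lt_of_le hkk with h | h
    · rw [Fin.ext h]
    · exact List.pairwise_iff_get.mp (sorted_Sl m c δ) k k' h
  · -- receivers sorted
    intro k k' hkk
    rcases Nat.eq_or_lt_of_le hkk with h | h
    · rw [Fin.ext h]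
    · exact List.pairwise_iff_get.mp (sorted_Rl m c δ) k k' h
  · -- rstart at 0
    intro k hk
    show rS m c δ k.val = 0
    rw [hk, rS_zero]
  · -- rstart succ
    intro k h
    show rS m c δ (k.val + 1) = rS m c δ k.val + c ((Sl m c δ).get k)
    rw [rS_succ m c δ k.val k.isLt]
  · -- sstart at 0
    intro k hk
    rcases k with ⟨kv, hlt⟩
    simp only [Fin.val] at hk
    subst hk
    have hlt' : 0 < (Rl m c δ).length := hlt
    show sst m c δ 0 = rS m c δ 0 + c ((Sl m c δ).get _)
    show rS m c δ 1 = _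
    rw [rS_succ m c δ 0 (by omega), rS_zero]
  · -- sstart succ
    intro k h
    have h' : k.val + 1 < (Rl m c δ).length := h
    show sst m c δ (k.val + 1) = max (sst m c δ k.val + c ((Rl m c δ).get k))
      (rS m c δ (k.val + 1) + c ((Sl m c δ).get _))
    rw [show sst m c δ (k.val + 1) = max (sst m c δ k.val + cR m c δ k.val)
        (rS m c δ (k.val + 2)) from rfl,
      cR_eq m c δ k.val k.isLt,
      rS_succ m c δ (k.val + 1) (by omega)]
  · -- optimality
    intro σ' M hM
    intro k
    show sst m c δ k.val + c ((Rl m c δ).get k) ≤ M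
    have claim : ∀ k : ℕ, k < (Sl m c δ).length →
        sst m c δ k + (((Rl m c δ).map c).drop k).sum ≤ M := by
      intro k
      induction k with
      | zero =>
        intro hk
        have := lower_bound m c δ hc hδ σ' M hM 0 hk
        simpa [List.drop_zero, sst] using this
      | succ n ih =>
        intro hk
        have hA : sst m c δ n + cR m c δ n + (((Rl m c δ).map c).drop (n+1)).sum ≤ M := by
          have h1 := ih (by omega)
          rw [drop_sum_eq m c δ n (by omega)] at h1
          linarith
        have hB : rS m c δ (n + 2) + (((Rl m c δ).map c).drop (n+1)).sum ≤ M :=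
          lower_bound m c δ hc hδ σ' M hM (n + 1) hk
        show max (sst m c δ n + cR m c δ n) (rS m c δ (n + 2)) + _ ≤ M
        rcases le_total (sst m c δ n + cR m c δ n) (rS m c δ (n + 2)) with h | h
        · rw [max_eq_right h]; exact hB
        · rw [max_eq_left h]; exact hA
    have hk2 : k.val < (Rl m c δ).length := k.isLt
    have hk : k.val < (Sl m c δ).length := by omega
    have h1 := claim k.val hk
    rw [drop_sum_eq m c δ k.val k.isLt] at h1
    have h2 := drop_sum_nonneg m c δ hc (k.val + 1)
    rw [cR_eq m c δ k.val k.isLt] at h1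
    simp only [Fin.eta] at h1
    linarith
end

section
/- In the reduction instance, if the 3-partition instance (y_i) admits a solution (a partition into n triples each of sum S), then there exists a valid schedule that redistributes and processes all 4n tasks within the deadline T = E + nS + S/4; namely worker P sends one task to the master every S/4 time units, and for each j ∈ [0, n−1] the master forwards tasks 4j+1, 4j+2, 4j+3 over links of costs x_{3j+1}, x_{3j+2}, x_{3j+3} to workers P_{3j+1}, P_{3j+2}, P_{3j+3} (indexed according to the 3-partition solution) and task 4j+4 over the link of cost S/8 to worker Q_{n−1−j}, all emissions from the master occurring back-to-back without idle time after time S/4. -/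
open scoped Classical

/-- A schedule on a star master–worker platform with `W` workers.  Worker `i` has
per-task communication time `c i`, per-task computation time `w i`, and initially
holds `L i` identical unit tasks.  All task transfers pass through the master under
the bidirectional one-port model (the master receives from at most one worker and
sends to at most one worker at any time, but may do both simultaneously); a worker
cannot start processing a received task before its reception completes, and
computation and communication may overlap.  Since the tasks are identical, a
schedule is described by the worker→master receptions, the master→worker emissions
and the task executions, subject to availability (counting) constraints. -/
structure StarSchedule (W : ℕ) (c w : Fin W → ℝ) (L : Fin W → ℕ) where
  /-- number of worker→master transfers -/
  nRecv : ℕ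
  /-- number of master→worker transfers -/
  nSend : ℕ
  /-- number of task executions -/
  nProc : ℕ
  /-- sender of the `k`-th worker→master transfer -/
  rsrc : Fin nRecv → Fin W
  /-- start time of the `k`-th worker→master transfer (it lasts `c (rsrc k)`) -/
  rstart : Fin nRecv → ℝ
  /-- destination of the `k`-th master→worker transfer -/
  sdst : Fin nSend → Fin W
  /-- start time of the `k`-th master→worker transfer (it lasts `c (sdst k)`) -/
  sstart : Fin nSend → ℝ
  /-- the worker performing the `p`-th task execution -/
  pw : Fin nProc → Fin W
  /-- start time of the `p`-th task execution (it lasts `w (pw p)`) -/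
  pstart : Fin nProc → ℝ
  rstart_nonneg : ∀ k, 0 ≤ rstart k
  sstart_nonneg : ∀ k, 0 ≤ sstart k
  pstart_nonneg : ∀ p, 0 ≤ pstart p
  /-- every task is eventually processed -/
  all_processed : nProc = ∑ i, L i
  /-- the master receives from at most one worker at a time -/
  oneport_in : ∀ k k', k ≠ k' →
    rstart k + c (rsrc k) ≤ rstart k' ∨ rstart k' + c (rsrc k') ≤ rstart k
  /-- the master sends to at most one worker at a time -/
  oneport_out : ∀ k k', k ≠ k' →
    sstart k + c (sdst k) ≤ sstart k' ∨ sstart k' + c (sdst k') ≤ sstart k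
  /-- the master can only forward tasks that it has completely received -/
  master_avail : ∀ t : ℝ,
    (Finset.univ.filter (fun k => sstart k ≤ t)).card ≤
      (Finset.univ.filter (fun k => rstart k + c (rsrc k) ≤ t)).card
  /-- a worker can only send or process tasks that it holds: at any time, the
  number of emissions it has begun plus the number of executions it has begun does
  not exceed its initial load plus the number of tasks it has completely
  received -/
  worker_avail : ∀ (i : Fin W) (t : ℝ),
    (Finset.univ.filter (fun k => rsrc k = i ∧ rstart k ≤ t)).card +
      (Finset.univ.filter (fun p => pw p = i ∧ pstart p ≤ t)).card ≤
    L i + (Finset.univ.filter (fun k => sdst k = i ∧ sstart k + c (sdst k) ≤ t)).card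
  /-- each worker processes at most one task at a time -/
  proc_seq : ∀ p p', p ≠ p' → pw p = pw p' →
    pstart p + w (pw p) ≤ pstart p' ∨ pstart p' + w (pw p') ≤ pstart p

/-- The schedule has makespan at most `T`: every task execution finishes by `T`. -/
def FinishesBy {W : ℕ} {c w : Fin W → ℝ} {L : Fin W → ℕ}
    (σ : StarSchedule W c w L) (T : ℝ) : Prop :=
  ∀ p, σ.pstart p + w (σ.pw p) ≤ T
/-- Communication times of the reduction platform: worker `0` is `P` (per-task
communication time `S/4`), workers `1,…,3n` are the `Pᵢ` (communication time
`xᵢ = S/4 + yᵢ/8`), and workers `3n+1,…,4n` are `Q₀,…,Q_{n-1}` (communication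
time `S/8`). -/
noncomputable def redC (n S : ℕ) (y : Fin (3*n) → ℕ) : Fin (4*n+1) → ℝ := fun i =>
  if h0 : i.val = 0 then (S : ℝ) / 4
  else if h : i.val ≤ 3*n then (S : ℝ) / 4 + (y ⟨i.val - 1, by omega⟩ : ℝ) / 8
  else (S : ℝ) / 8

/-- Computation times of the reduction platform: `P` needs `T + 1` per task
(where `T = E + nS + S/4` is the deadline), each `Pᵢ` needs `E = (n+1)S`, and
`Q_q` (worker `3n+1+q`) needs `E + q·S`. -/
noncomputable def redW (n S : ℕ) : Fin (4*n+1) → ℝ := fun i =>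
  if i.val = 0 then (((n : ℝ) + 1) * S + (n : ℝ) * S + (S : ℝ) / 4) + 1
  else if i.val ≤ 3*n then ((n : ℝ) + 1) * S
  else ((n : ℝ) + 1) * S + ((i.val - (3*n+1) : ℕ) : ℝ) * S

/-- Initial loads of the reduction platform: worker `P` holds the `4n` tasks,
all other workers hold none. -/
def redL (n : ℕ) : Fin (4*n+1) → ℕ := fun i => if i.val = 0 then 4*n else 0

/-- The deadline `T = E + nS + S/4` with `E = (n+1)S`. -/
noncomputable def redT (n S : ℕ) : ℝ := ((n : ℝ) + 1) * S + (n : ℝ) * S + (S : ℝ) / 4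

/-- `p` partitions the `3n` values `y i` into `n` triples each of sum exactly `S`. -/
def IsThreePartition (n S : ℕ) (y : Fin (3*n) → ℕ) (p : Fin (3*n) → Fin n) : Prop :=
  ∀ g : Fin n, (Finset.univ.filter (fun i => p i = g)).card = 3 ∧
    ∑ i ∈ Finset.univ.filter (fun i => p i = g), y i = S

section Aux

variable (n S : ℕ) (y : Fin (3*n) → ℕ) (p : Fin (3*n) → Fin n)
  (hc : ∀ g : Fin n, (Finset.univ.filter (fun i => p i = g)).card = 3)

noncomputable def elemOf (g : Fin n) (r : Fin 3) : Fin (3*n) :=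
  ((Finset.univ.filter (fun i => p i = g)).orderIsoOfFin (hc g) r : Fin (3*n))

lemma elemOf_mem (g : Fin n) (r : Fin 3) : p (elemOf n p hc g r) = g := by
  have h := ((Finset.univ.filter (fun i => p i = g)).orderIsoOfFin (hc g) r).2
  rw [Finset.mem_filter] at h
  exact h.2

lemma elemOf_inj {g g' : Fin n} {r r' : Fin 3}
    (h : elemOf n p hc g r = elemOf n p hc g' r') : g = g' ∧ r = r' := by
  have hg : g = g' := by
    rw [← elemOf_mem n p hc g r, ← elemOf_mem n p hc g' r', h]
  subst hg
  refine ⟨rfl, ?_⟩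
  have := Subtype.coe_injective (p := fun x => x ∈ Finset.univ.filter (fun i => p i = g)) h
  exact ((Finset.univ.filter (fun i => p i = g)).orderIsoOfFin (hc g)).injective this

lemma sum_elemOf (g : Fin n) :
    y (elemOf n p hc g ⟨0, by omega⟩) + y (elemOf n p hc g ⟨1, by omega⟩) +
      y (elemOf n p hc g ⟨2, by omega⟩) =
      ∑ i ∈ Finset.univ.filter (fun i => p i = g), y i := by
  have h1 : ∑ r : Fin 3, y (elemOf n p hc g r) =
      ∑ i ∈ Finset.univ.filter (fun i => p i = g), y i := by
    rw [← Finset.sum_coe_sort (Finset.univ.filter (fun i => p i = g)) (fun i => y i)]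
    exact Equiv.sum_comp ((Finset.univ.filter (fun i => p i = g)).orderIsoOfFin (hc g)).toEquiv
      (fun a => y (a : Fin (3*n)))
  rw [← h1, Fin.sum_univ_three]
  rfl


noncomputable def dstF : ℕ → Fin (4*n+1) := fun k =>
  if h : k < 4*n then
    if hr : k % 4 < 3 then
      ⟨(elemOf n p hc ⟨k / 4, by omega⟩ ⟨k % 4, hr⟩).val + 1, by
        have := (elemOf n p hc ⟨k / 4, by omega⟩ ⟨k % 4, hr⟩).isLt; omega⟩
    else ⟨3*n + 1 + (n - 1 - k / 4), by omega⟩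
  else ⟨0, by omega⟩

lemma dstF_x {k : ℕ} (hk : k < 4*n) (hr : k % 4 < 3) :
    dstF n p hc k = ⟨(elemOf n p hc ⟨k / 4, by omega⟩ ⟨k % 4, hr⟩).val + 1, by
        have := (elemOf n p hc ⟨k / 4, by omega⟩ ⟨k % 4, hr⟩).isLt; omega⟩ := by
  simp [dstF, hk, hr]

lemma dstF_q {k : ℕ} (hk : k < 4*n) (hr : ¬ (k % 4 < 3)) :
    dstF n p hc k = ⟨3*n + 1 + (n - 1 - k / 4), by omega⟩ := by
  simp [dstF, hk, hr]

noncomputable def durF : ℕ → ℝ := fun k => redC n S y (dstF n p hc k)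

lemma durF_def (k : ℕ) : durF n S y p hc k = redC n S y (dstF n p hc k) := rfl

noncomputable def sstartF : ℕ → ℝ := fun k =>
  (S : ℝ) / 4 + ∑ m ∈ Finset.range k, durF n S y p hc m

lemma dur_x {k : ℕ} (hk : k < 4*n) (hr : k % 4 < 3) :
    durF n S y p hc k =
      (S : ℝ) / 4 + (y (elemOf n p hc ⟨k / 4, by omega⟩ ⟨k % 4, hr⟩) : ℝ) / 8 := by
  rw [durF, dstF_x n p hc hk hr, redC]
  have hlt := (elemOf n p hc ⟨k / 4, by omega⟩ ⟨k % 4, hr⟩).isLt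
  simp only [dif_neg (by omega : ¬ ((elemOf n p hc ⟨k / 4, by omega⟩ ⟨k % 4, hr⟩).val + 1 = 0)),
    dif_pos (by omega : (elemOf n p hc ⟨k / 4, by omega⟩ ⟨k % 4, hr⟩).val + 1 ≤ 3*n)]
  congr 2

lemma dur_q {k : ℕ} (hk : k < 4*n) (hr : ¬ (k % 4 < 3)) :
    durF n S y p hc k = (S : ℝ) / 8 := by
  rw [durF, dstF_q n p hc hk hr, redC]
  simp only []
  rw [dif_neg (by omega), dif_neg (by omega)]

lemma redC_nonneg (i : Fin (4*n+1)) : 0 ≤ redC n S y i := by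
  rw [redC]
  split_ifs <;> positivity

lemma dur_nonneg (k : ℕ) : 0 ≤ durF n S y p hc k := redC_nonneg n S y _

lemma dur_ge {k : ℕ} (hk : k < 4*n) (hr : k % 4 < 3) :
    (S : ℝ) / 4 ≤ durF n S y p hc k := by
  rw [dur_x n S y p hc hk hr]
  have : (0:ℝ) ≤ (y (elemOf n p hc ⟨k / 4, by omega⟩ ⟨k % 4, hr⟩) : ℝ) / 8 := by positivity
  linarith

lemma dur_x' (j r : ℕ) (hj : j < n) (hr : r < 3) :
    durF n S y p hc (4*j + r) =
      (S : ℝ) / 4 + (y (elemOf n p hc ⟨j, hj⟩ ⟨r, hr⟩) : ℝ) / 8 := by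
  rw [dur_x n S y p hc (by omega) (by omega : (4*j+r) % 4 < 3)]
  simp only [show (4*j+r)/4 = j from by omega, show (4*j+r) % 4 = r from by omega]

lemma dur_q' (j : ℕ) (hj : j < n) : durF n S y p hc (4*j + 3) = (S : ℝ) / 8 :=
  dur_q n S y p hc (by omega) (by omega)

lemma sum_dur_triple (hs : ∀ g : Fin n,
      ∑ i ∈ Finset.univ.filter (fun i => p i = g), y i = S)
    (j : ℕ) (hj : j < n) :
    durF n S y p hc (4*j) + durF n S y p hc (4*j+1) + durF n S y p hc (4*j+2) =
      7 * (S : ℝ) / 8 := by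
  have h0 := dur_x' n S y p hc j 0 hj (by omega)
  have h1 := dur_x' n S y p hc j 1 hj (by omega)
  have h2 := dur_x' n S y p hc j 2 hj (by omega)
  have hsum : y (elemOf n p hc ⟨j, hj⟩ ⟨0, by omega⟩) + y (elemOf n p hc ⟨j, hj⟩ ⟨1, by omega⟩) +
      y (elemOf n p hc ⟨j, hj⟩ ⟨2, by omega⟩) = S := by
    rw [sum_elemOf n y p hc ⟨j, hj⟩]; exact hs ⟨j, hj⟩
  have hsum' : (y (elemOf n p hc ⟨j, hj⟩ ⟨0, by omega⟩) : ℝ) +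
      y (elemOf n p hc ⟨j, hj⟩ ⟨1, by omega⟩) +
      y (elemOf n p hc ⟨j, hj⟩ ⟨2, by omega⟩) = S := by exact_mod_cast congrArg Nat.cast hsum
  have e0 : 4*j + 0 = 4*j := by omega
  rw [← e0, h0, h1, h2]
  linarith

lemma sum_range_two' (f : ℕ → ℝ) (a : ℕ) :
    ∑ m ∈ Finset.range (a+2), f m = ∑ m ∈ Finset.range a, f m + (f a + f (a+1)) := by
  rw [show a+2 = (a+1)+1 from by omega, Finset.sum_range_succ, Finset.sum_range_succ]
  ring

lemma sum_range_three' (f : ℕ → ℝ) (a : ℕ) :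
    ∑ m ∈ Finset.range (a+3), f m =
      ∑ m ∈ Finset.range a, f m + (f a + f (a+1) + f (a+2)) := by
  rw [show a+3 = (a+2)+1 from by omega, Finset.sum_range_succ,
      show a+2 = (a+1)+1 from by omega, Finset.sum_range_succ, Finset.sum_range_succ]
  ring

lemma sum_range_four' (f : ℕ → ℝ) (a : ℕ) :
    ∑ m ∈ Finset.range (a+4), f m =
      ∑ m ∈ Finset.range a, f m + (f a + f (a+1) + f (a+2) + f (a+3)) := by
  rw [show a+4 = (a+3)+1 from by omega, Finset.sum_range_succ,
      show a+3 = (a+2)+1 from by omega, Finset.sum_range_succ,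
      show a+2 = (a+1)+1 from by omega, Finset.sum_range_succ, Finset.sum_range_succ]
  ring

lemma sum_block (hs : ∀ g : Fin n,
      ∑ i ∈ Finset.univ.filter (fun i => p i = g), y i = S) :
    ∀ j, j ≤ n → ∑ m ∈ Finset.range (4*j), durF n S y p hc m = (j:ℝ) * S := by
  intro j
  induction j with
  | zero => simp
  | succ j ih =>
    intro hj
    have hj' : j < n := by omega
    rw [show 4*(j+1) = 4*j + 4 from by ring, sum_range_four', ih (by omega),
        dur_q' n S y p hc j hj']
    have htrip := sum_dur_triple n S y p hc hs j hj'
    push_cast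
    linarith

lemma sum_4j3 (hs : ∀ g : Fin n,
      ∑ i ∈ Finset.univ.filter (fun i => p i = g), y i = S)
    (j : ℕ) (hj : j < n) :
    ∑ m ∈ Finset.range (4*j+3), durF n S y p hc m = (j:ℝ) * S + 7 * (S:ℝ) / 8 := by
  rw [sum_range_three', sum_block n S y p hc hs j (by omega)]
  have htrip := sum_dur_triple n S y p hc hs j hj
  linarith

lemma sum_mono_dur {a b : ℕ} (h : a ≤ b) :
    ∑ m ∈ Finset.range a, durF n S y p hc m ≤ ∑ m ∈ Finset.range b, durF n S y p hc m :=
  Finset.sum_le_sum_of_subset_of_nonneg (Finset.range_subset_range.2 h)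
    (fun i _ _ => dur_nonneg n S y p hc i)

lemma sum_nonneg_dur (a : ℕ) : 0 ≤ ∑ m ∈ Finset.range a, durF n S y p hc m :=
  Finset.sum_nonneg (fun i _ => dur_nonneg n S y p hc i)

lemma prefix_ge (hs : ∀ g : Fin n,
      ∑ i ∈ Finset.univ.filter (fun i => p i = g), y i = S)
    (k : ℕ) (hk : k ≤ 4*n) :
    (k:ℝ) * ((S:ℝ)/4) ≤ ∑ m ∈ Finset.range k, durF n S y p hc m := by
  obtain ⟨j, r, hr4, rfl⟩ : ∃ j r, r < 4 ∧ k = 4*j+r := ⟨k/4, k%4, by omega, by omega⟩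
  interval_cases r
  · rw [show 4*j+0 = 4*j from rfl, sum_block n S y p hc hs j (by omega)]
    have : ((4*j:ℕ):ℝ) * ((S:ℝ)/4) = (j:ℝ)*S := by push_cast; ring
    linarith
  · have hj : j < n := by omega
    rw [Finset.sum_range_succ, sum_block n S y p hc hs j (by omega)]
    have h0 := dur_ge n S y p hc (by omega : 4*j < 4*n) (by omega)
    have : ((4*j+1:ℕ):ℝ) * ((S:ℝ)/4) = (j:ℝ)*S + (S:ℝ)/4 := by push_cast; ring
    linarith
  · have hj : j < n := by omega
    rw [sum_range_two', sum_block n S y p hc hs j (by omega)]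
    have h0 := dur_ge n S y p hc (by omega : 4*j < 4*n) (by omega)
    have h1 := dur_ge n S y p hc (by omega : 4*j+1 < 4*n) (by omega)
    have : ((4*j+2:ℕ):ℝ) * ((S:ℝ)/4) = (j:ℝ)*S + 2*((S:ℝ)/4) := by push_cast; ring
    linarith
  · have hj : j < n := by omega
    rw [sum_range_three', sum_block n S y p hc hs j (by omega)]
    have h0 := dur_ge n S y p hc (by omega : 4*j < 4*n) (by omega)
    have h1 := dur_ge n S y p hc (by omega : 4*j+1 < 4*n) (by omega)
    have h2 := dur_ge n S y p hc (by omega : 4*j+2 < 4*n) (by omega)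
    have : ((4*j+3:ℕ):ℝ) * ((S:ℝ)/4) = (j:ℝ)*S + 3*((S:ℝ)/4) := by push_cast; ring
    linarith

lemma sstartF_succ (k : ℕ) :
    sstartF n S y p hc (k+1) = sstartF n S y p hc k + durF n S y p hc k := by
  rw [sstartF, sstartF, Finset.sum_range_succ]; ring

lemma sstartF_mono {a b : ℕ} (h : a ≤ b) : sstartF n S y p hc a ≤ sstartF n S y p hc b := by
  have := sum_mono_dur n S y p hc h
  rw [sstartF, sstartF]; linarith

lemma sstartF_nonneg (k : ℕ) : 0 ≤ sstartF n S y p hc k := by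
  have := sum_nonneg_dur n S y p hc k
  rw [sstartF]; positivity

lemma dstF_val_ne {k : ℕ} (hk : k < 4*n) : (dstF n p hc k).val ≠ 0 := by
  by_cases hr : k % 4 < 3
  · rw [dstF_x n p hc hk hr]; simp only [Fin.val_mk]; omega
  · rw [dstF_q n p hc hk hr]; simp only [Fin.val_mk]; omega

lemma dstF_inj {k k' : ℕ} (hk : k < 4*n) (hk' : k' < 4*n)
    (h : dstF n p hc k = dstF n p hc k') : k = k' := by
  have hv := congrArg Fin.val h
  by_cases hr : k % 4 < 3 <;> by_cases hr' : k' % 4 < 3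
  · rw [dstF_x n p hc hk hr, dstF_x n p hc hk' hr'] at hv
    simp only [Fin.val_mk] at hv
    have he : elemOf n p hc ⟨k / 4, by omega⟩ ⟨k % 4, hr⟩ =
        elemOf n p hc ⟨k' / 4, by omega⟩ ⟨k' % 4, hr'⟩ := Fin.ext (by omega)
    obtain ⟨hg, hrr⟩ := elemOf_inj n p hc he
    have h1 : k / 4 = k' / 4 := congrArg Fin.val hg
    have h2 : k % 4 = k' % 4 := congrArg Fin.val hrr
    omega
  · rw [dstF_x n p hc hk hr, dstF_q n p hc hk' hr'] at hv
    simp only [Fin.val_mk] at hv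
    have := (elemOf n p hc ⟨k / 4, by omega⟩ ⟨k % 4, hr⟩).isLt
    omega
  · rw [dstF_q n p hc hk hr, dstF_x n p hc hk' hr'] at hv
    simp only [Fin.val_mk] at hv
    have := (elemOf n p hc ⟨k' / 4, by omega⟩ ⟨k' % 4, hr'⟩).isLt
    omega
  · rw [dstF_q n p hc hk hr, dstF_q n p hc hk' hr'] at hv
    simp only [Fin.val_mk] at hv
    omega

lemma dstF_q3 (j : ℕ) (hj : j < n) :
    dstF n p hc (4*j+3) = ⟨3*n + 1 + (n - 1 - j), by omega⟩ := by
  rw [dstF_q n p hc (by omega) (by omega)]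
  exact Fin.ext (by simp only [Fin.val_mk]; omega)

lemma redW_mid (i : Fin (4*n+1)) (h1 : i.val ≠ 0) (h2 : i.val ≤ 3*n) :
    redW n S i = ((n:ℝ)+1) * S := by
  simp [redW, h1, h2]

lemma redW_hi (i : Fin (4*n+1)) (h : 3*n < i.val) :
    redW n S i = ((n:ℝ)+1) * S + ((i.val - (3*n+1) : ℕ) : ℝ) * S := by
  rw [redW, if_neg (by omega), if_neg (by omega)]

lemma redW_of_dstF_x {k : ℕ} (hk : k < 4*n) (hr : k % 4 < 3) :
    redW n S (dstF n p hc k) = ((n:ℝ)+1) * S := by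
  rw [dstF_x n p hc hk hr]
  have hlt := (elemOf n p hc ⟨k / 4, by omega⟩ ⟨k % 4, hr⟩).isLt
  refine redW_mid n S _ ?_ ?_ <;> simp only [Fin.val_mk] <;> omega

lemma redL_sum : ∑ i, redL n i = 4*n := by
  rw [Finset.sum_eq_single (⟨0, by omega⟩ : Fin (4*n+1))]
  · simp [redL]
  · intro b _ hb
    have : b.val ≠ 0 := fun h => hb (Fin.ext h)
    simp [redL, this]
  · simp

lemma redW_of_dstF_q (j : ℕ) (hj : j < n) :
    redW n S (dstF n p hc (4*j+3)) = ((n:ℝ)+1)*S + (((n-1-j:ℕ)):ℝ)*S := by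
  rw [dstF_q3 n p hc j hj]
  rw [redW_hi n S _ (by simp only [Fin.val_mk]; omega)]
  simp only [Fin.val_mk]
  rw [show 3*n+1+(n-1-j) - (3*n+1) = n-1-j from by omega]

end Aux

set_option maxHeartbeats 4000000 in
/-- **Creation of a schedule out of a solution to 3-Partition.**
If the 3-Partition instance `(y i)` admits a solution `p`, then on the reduction
platform there is a valid schedule finishing all `4n` tasks by the deadline
`T = E + nS + S/4`, of the following form: worker `P` (worker `0`) sends one task
to the master every `S/4` time units; the master forwards the tasks back-to-back
without idle time starting at time `S/4`; for every `j ∈ [0, n-1]`, the emissions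
of ranks `4j, 4j+1, 4j+2` go to three pairwise distinct workers among
`P₁,…,P_{3n}` forming (after reindexing according to the 3-Partition solution) a
triple whose communication costs `x` sum to `7S/8`, and the emission of rank
`4j+3` goes to worker `Q_{n-1-j}`. -/
theorem schedule_from_three_partition
    (n S : ℕ) (hS : 0 < S) (hn : 0 < n) (y : Fin (3*n) → ℕ)
    (hy : ∀ i, S < 4 * y i ∧ 2 * y i < S)
    (p : Fin (3*n) → Fin n) (hp : IsThreePartition n S y p) :
    ∃ σ : StarSchedule (4*n+1) (redC n S y) (redW n S) (redL n),
      ∃ hR : σ.nRecv = 4*n, ∃ hE : σ.nSend = 4*n,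
      FinishesBy σ (redT n S) ∧
      -- worker P sends all the tasks, one every S/4 time units
      (∀ k : Fin σ.nRecv, σ.rsrc k = ⟨0, by omega⟩) ∧
      (∀ k : Fin σ.nRecv, σ.rstart k = (k.val : ℝ) * ((S : ℝ) / 4)) ∧
      -- the master forwards them in order, back-to-back, starting at time S/4
      (∀ k : Fin σ.nSend, k.val = 0 → σ.sstart k = (S : ℝ) / 4) ∧
      (∀ k : Fin σ.nSend, ∀ h : k.val + 1 < σ.nSend,
        σ.sstart ⟨k.val + 1, h⟩ = σ.sstart k + redC n S y (σ.sdst k)) ∧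
      -- the emissions of ranks 4j, 4j+1, 4j+2 go to workers among P₁,…,P_{3n},
      -- pairwise distinct ones
      (∀ k : Fin σ.nSend, k.val % 4 < 3 →
        1 ≤ (σ.sdst k).val ∧ (σ.sdst k).val ≤ 3*n) ∧
      (∀ k k' : Fin σ.nSend, k ≠ k' → k.val % 4 < 3 → k'.val % 4 < 3 →
        σ.sdst k ≠ σ.sdst k') ∧
      -- the emission of rank 4j+3 goes to worker Q_{n-1-j}
      (∀ j : ℕ, ∀ hj : j < n,
        (σ.sdst ⟨4*j + 3, by omega⟩).val = 3*n + 1 + (n - 1 - j)) ∧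
      -- each consecutive triple of `P`-emissions corresponds to a triple of the
      -- 3-Partition solution: its communication costs sum to 7S/8
      (∀ j : ℕ, ∀ hj : j < n,
        redC n S y (σ.sdst ⟨4*j, by omega⟩) + redC n S y (σ.sdst ⟨4*j + 1, by omega⟩) +
          redC n S y (σ.sdst ⟨4*j + 2, by omega⟩) = 7 * (S : ℝ) / 8) := by
  have hc : ∀ g : Fin n, (Finset.univ.filter (fun i => p i = g)).card = 3 := fun g => (hp g).1
  have hs : ∀ g : Fin n, ∑ i ∈ Finset.univ.filter (fun i => p i = g), y i = S :=
    fun g => (hp g).2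
  have hS' : (0:ℝ) ≤ S := by positivity
  have hc0 : redC n S y ⟨0, by omega⟩ = (S:ℝ)/4 := by simp [redC]
  refine ⟨⟨4*n, 4*n, 4*n,
    (fun _ => ⟨0, by omega⟩),
    (fun k => (k.val : ℝ) * ((S:ℝ)/4)),
    (fun k => dstF n p hc k.val),
    (fun k => sstartF n S y p hc k.val),
    (fun q => dstF n p hc q.val),
    (fun q => sstartF n S y p hc q.val + redC n S y (dstF n p hc q.val)),
    ?_, ?_, ?_, ?_, ?_, ?_, ?_, ?_, ?_⟩, rfl, rfl, ?_, ?_, ?_, ?_, ?_, ?_, ?_, ?_, ?_⟩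
  · intro k; positivity
  · intro k; exact sstartF_nonneg n S y p hc k.val
  · intro q
    have h1 := sstartF_nonneg n S y p hc q.val
    have h2 := redC_nonneg n S y (dstF n p hc q.val)
    linarith
  · exact (redL_sum n).symm
  · -- oneport_in
    intro k k' hne
    have hvne : k.val ≠ k'.val := fun h => hne (Fin.ext h)
    rw [hc0]
    rcases lt_or_gt_of_ne hvne with h | h
    · left
      have h1 : ((k.val:ℝ)+1) ≤ (k'.val:ℝ) := by exact_mod_cast h
      have h2 : (0:ℝ) ≤ (S:ℝ)/4 := by positivity
      nlinarith
    · right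
      have h1 : ((k'.val:ℝ)+1) ≤ (k.val:ℝ) := by exact_mod_cast h
      have h2 : (0:ℝ) ≤ (S:ℝ)/4 := by positivity
      nlinarith
  · -- oneport_out
    intro k k' hne
    have hvne : k.val ≠ k'.val := fun h => hne (Fin.ext h)
    rcases lt_or_gt_of_ne hvne with h | h
    · left
      rw [← durF_def, ← sstartF_succ]
      exact sstartF_mono n S y p hc (by omega)
    · right
      rw [← durF_def, ← sstartF_succ]
      exact sstartF_mono n S y p hc (by omega)
  · -- master_avail
    intro t
    apply Finset.card_le_card
    intro k hk
    simp only [Finset.mem_filter, Finset.mem_univ, true_and] at hk ⊢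
    rw [hc0]
    have hpg := prefix_ge n S y p hc hs k.val (le_of_lt k.isLt)
    rw [sstartF] at hk
    linarith
  · -- worker_avail
    intro i t
    by_cases hi : i.val = 0
    · have h2 : (Finset.univ.filter (fun q : Fin (4*n) =>
          dstF n p hc q.val = i ∧
          sstartF n S y p hc q.val + redC n S y (dstF n p hc q.val) ≤ t)) = ∅ := by
        rw [Finset.filter_eq_empty_iff]
        rintro q - ⟨hq, -⟩
        exact dstF_val_ne n p hc q.isLt (by rw [hq, hi])
      have hL : redL n i = 4*n := by simp [redL, hi]
      rw [h2, hL, Finset.card_empty]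
      have h1 := Finset.card_filter_le (Finset.univ : Finset (Fin (4*n)))
        (fun k => (⟨0, by omega⟩ : Fin (4*n+1)) = i ∧ (k.val : ℝ) * ((S:ℝ)/4) ≤ t)
      have h3 : (Finset.univ : Finset (Fin (4*n))).card = 4*n := by simp
      omega
    · have hne0 : (⟨0, by omega⟩ : Fin (4*n+1)) ≠ i := fun h => hi (by rw [← h])
      have h1 : (Finset.univ.filter (fun k : Fin (4*n) =>
          (⟨0, by omega⟩ : Fin (4*n+1)) = i ∧ (k.val : ℝ) * ((S:ℝ)/4) ≤ t)) = ∅ := by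
        rw [Finset.filter_eq_empty_iff]
        rintro k - ⟨hq, -⟩
        exact hne0 hq
      rw [h1, Finset.card_empty, Nat.zero_add]
      exact Nat.le_add_left _ _
  · -- proc_seq
    intro q q' hne heq
    exact absurd (Fin.ext (dstF_inj n p hc q.isLt q'.isLt heq)) hne
  · -- FinishesBy
    intro q
    dsimp only
    obtain ⟨j, r, hr4, hkeq⟩ : ∃ j r, r < 4 ∧ q.val = 4*j+r :=
      ⟨q.val/4, q.val%4, by omega, by omega⟩
    have hq4 : q.val < 4*n := q.isLt
    have hj : j < n := by omega
    rw [← durF_def, ← sstartF_succ]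
    by_cases hr : r < 3
    · have hw : redW n S (dstF n p hc q.val) = ((n:ℝ)+1)*S :=
        redW_of_dstF_x n S p hc hq4 (by omega)
      have hle : sstartF n S y p hc (q.val+1) ≤ sstartF n S y p hc (4*j+3) :=
        sstartF_mono n S y p hc (by omega)
      have h43 : sstartF n S y p hc (4*j+3) = (S:ℝ)/4 + ((j:ℝ)*S + 7*(S:ℝ)/8) := by
        rw [sstartF, sum_4j3 n S y p hc hs j hj]
      have hjn : ((j:ℝ)+1) ≤ (n:ℝ) := by exact_mod_cast hj
      have hjs : (j:ℝ)*S ≤ ((n:ℝ)-1)*S :=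
        mul_le_mul_of_nonneg_right (by linarith) hS'
      rw [hw, redT]
      linarith
    · have hr3 : r = 3 := by omega
      subst hr3
      rw [hkeq, redW_of_dstF_q n S p hc j hj]
      have hstart : sstartF n S y p hc (4*j+3+1) = (S:ℝ)/4 + ((j:ℝ)+1)*S := by
        rw [show 4*j+3+1 = 4*(j+1) from by omega, sstartF,
          sum_block n S y p hc hs (j+1) (by omega)]
        push_cast; ring
      rw [hstart, redT]
      have hcast : ((n-1-j:ℕ):ℝ) = (n:ℝ) - 1 - (j:ℝ) := by
        have hh : ((n-1-j) + (j+1) : ℕ) = n := by omega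
        have h2 := congrArg (Nat.cast (R:=ℝ)) hh
        push_cast at h2
        linarith
      apply le_of_eq
      rw [hcast]
      ring
  · intro k; rfl
  · intro k; rfl
  · -- sstart at 0
    intro k hk0
    dsimp only
    rw [hk0]
    simp [sstartF]
  · -- back-to-back
    intro k h
    dsimp only
    rw [sstartF_succ, durF_def]
  · -- range condition
    intro k hk
    have hk4 : k.val < 4*n := k.isLt
    dsimp only
    rw [dstF_x n p hc hk4 hk]
    have hlt := (elemOf n p hc ⟨k.val / 4, by omega⟩ ⟨k.val % 4, hk⟩).isLt
    simp only [Fin.val_mk]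
    omega
  · -- pairwise distinct
    intro k k' hne h3 h3' heq
    exact hne (Fin.ext (dstF_inj n p hc k.isLt k'.isLt heq))
  · -- rank 4j+3
    intro j hj
    dsimp only
    rw [dstF_q3 n p hc j hj]
  · -- triple sum
    intro j hj
    exact sum_dur_triple n S y p hc hs j hj
end

section
/- In the reduction instance, in any valid schedule that completes all 4n tasks by the deadline T = E + nS + S/4, no worker other than worker P sends any task to the master. -/
open scoped Classical

section AuxLemmas

private lemma sum_len_le_aux {ι : Type*} (a ln : ι → ℝ) :
    ∀ N : ℕ, ∀ s : Finset ι, s.card ≤ N → ∀ T : ℝ, 0 ≤ T →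
    (∀ i ∈ s, 0 ≤ a i) → (∀ i ∈ s, 0 < ln i) →
    (∀ i ∈ s, ∀ j ∈ s, i ≠ j → a i + ln i ≤ a j ∨ a j + ln j ≤ a i) →
    (∀ i ∈ s, a i + ln i ≤ T) → ∑ i ∈ s, ln i ≤ T := by
  intro N
  induction N with
  | zero =>
    intro s hs T hT _ _ _ _
    have : s = ∅ := Finset.card_eq_zero.mp (Nat.le_zero.mp hs)
    simp [this, hT]
  | succ N ih =>
    intro s hs T hT ha hl hd hend
    rcases s.eq_empty_or_nonempty with rfl | hne
    · simpa using hT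
    · obtain ⟨m, hm, hmax⟩ := s.exists_max_image a hne
      have hcard : (s.erase m).card ≤ N := by
        have := Finset.card_erase_of_mem hm
        omega
      have key : ∑ i ∈ s.erase m, ln i ≤ a m := by
        refine ih (s.erase m) hcard (a m) (ha m hm)
          (fun i hi => ha i (Finset.mem_of_mem_erase hi))
          (fun i hi => hl i (Finset.mem_of_mem_erase hi))
          (fun i hi j hj hij =>
            hd i (Finset.mem_of_mem_erase hi) j (Finset.mem_of_mem_erase hj) hij)
          (fun i hi => ?_)
        rcases hd i (Finset.mem_of_mem_erase hi) m hm (Finset.ne_of_mem_erase hi) with h | h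
        · exact h
        · have h1 := hmax i (Finset.mem_of_mem_erase hi)
          have h2 := hl m hm
          linarith
      have hsum : (∑ i ∈ s, ln i) = ln m + ∑ i ∈ s.erase m, ln i :=
        (Finset.add_sum_erase s ln hm).symm
      have := hend m hm
      linarith

private lemma sum_len_le {ι : Type*} (s : Finset ι) (a ln : ι → ℝ) (T : ℝ)
    (hT : 0 ≤ T) (ha : ∀ i ∈ s, 0 ≤ a i) (hl : ∀ i ∈ s, 0 < ln i)
    (hd : ∀ i ∈ s, ∀ j ∈ s, i ≠ j → a i + ln i ≤ a j ∨ a j + ln j ≤ a i)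
    (hend : ∀ i ∈ s, a i + ln i ≤ T) : ∑ i ∈ s, ln i ≤ T :=
  sum_len_le_aux a ln s.card s le_rfl T hT ha hl hd hend

private lemma redC_of_val_zero (n S : ℕ) (y : Fin (3*n) → ℕ) (j : Fin (4*n+1))
    (h : j.val = 0) : redC n S y j = (S:ℝ)/4 := by
  simp [redC, h]

private lemma redC_of_Q (n S : ℕ) (y : Fin (3*n) → ℕ) (j : Fin (4*n+1))
    (h : 3*n < j.val) : redC n S y j = (S:ℝ)/8 := by
  have h0 : ¬ j.val = 0 := by omega
  have h1 : ¬ j.val ≤ 3*n := by omega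
  simp [redC, h0, h1]

private lemma redC_ge_eighth (n S : ℕ) (y : Fin (3*n) → ℕ) (j : Fin (4*n+1)) :
    (S:ℝ)/8 ≤ redC n S y j := by
  have hS' : (0:ℝ) ≤ (S:ℝ) := Nat.cast_nonneg S
  by_cases h0 : j.val = 0
  · rw [redC_of_val_zero n S y j h0]; linarith
  by_cases h1 : j.val ≤ 3*n
  · have hy' : (0:ℝ) ≤ ((y ⟨j.val - 1, by omega⟩ : ℕ) : ℝ) := Nat.cast_nonneg _
    simp only [redC, dif_neg h0, dif_pos h1]
    linarith
  · rw [redC_of_Q n S y j (by omega)]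

private lemma redC_pos (n S : ℕ) (y : Fin (3*n) → ℕ) (hS : 0 < S) (j : Fin (4*n+1)) :
    0 < redC n S y j := by
  have hS' : (0:ℝ) < (S:ℝ) := by exact_mod_cast hS
  have := redC_ge_eighth n S y j
  linarith

private lemma redC_le_quarter_cases (n S : ℕ) (y : Fin (3*n) → ℕ) (hS : 0 < S)
    (hy : ∀ i, S < 4 * y i) (j : Fin (4*n+1)) (h : redC n S y j ≤ (S:ℝ)/4) :
    j.val = 0 ∨ 3*n < j.val := by
  by_cases h0 : j.val = 0
  · exact Or.inl h0
  by_cases h1 : j.val ≤ 3*n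
  · exfalso
    have hS' : (0:ℝ) < (S:ℝ) := by exact_mod_cast hS
    have hyy := hy ⟨j.val - 1, by omega⟩
    have hy' : (0:ℝ) < ((y ⟨j.val - 1, by omega⟩ : ℕ) : ℝ) := by
      have : 0 < y ⟨j.val - 1, by omega⟩ := by omega
      exact_mod_cast this
    simp only [redC, dif_neg h0, dif_pos h1] at h
    linarith
  · exact Or.inr (by omega)

private lemma redC_le_eighth_Q (n S : ℕ) (y : Fin (3*n) → ℕ) (hS : 0 < S)
    (hy : ∀ i, S < 4 * y i) (j : Fin (4*n+1)) (h : redC n S y j ≤ (S:ℝ)/8) :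
    3*n < j.val := by
  have hS' : (0:ℝ) < (S:ℝ) := by exact_mod_cast hS
  rcases redC_le_quarter_cases n S y hS hy j (h.trans (by linarith)) with h0 | h1
  · exfalso
    rw [redC_of_val_zero n S y j h0] at h
    linarith
  · exact h1

private lemma redW_of_val_zero (n S : ℕ) (j : Fin (4*n+1)) (h : j.val = 0) :
    redW n S j = redT n S + 1 := by
  simp [redW, redT, h]

private lemma redW_ge (n S : ℕ) (j : Fin (4*n+1)) (h : j.val ≠ 0) :
    ((n:ℝ)+1) * (S:ℝ) ≤ redW n S j := by
  by_cases h1 : j.val ≤ 3*n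
  · simp [redW, h, h1]
  · simp only [redW, if_neg h, if_neg h1]
    have : (0:ℝ) ≤ ((j.val - (3*n+1) : ℕ) : ℝ) * (S:ℝ) := by positivity
    linarith

private lemma redW_Q_small (n S : ℕ) (hS : 0 < S) (j : Fin (4*n+1)) (hQ : 3*n < j.val)
    (h : redW n S j ≤ ((n:ℝ)+1) * (S:ℝ) + (S:ℝ)/4) : j.val = 3*n+1 := by
  have h0 : ¬ j.val = 0 := by omega
  have h1 : ¬ j.val ≤ 3*n := by omega
  have hS' : (0:ℝ) < (S:ℝ) := by exact_mod_cast hS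
  simp only [redW, if_neg h0, if_neg h1] at h
  have hd : ((j.val - (3*n+1) : ℕ) : ℝ) * (S:ℝ) ≤ (S:ℝ)/4 := by linarith
  have hd1 : ((j.val - (3*n+1) : ℕ) : ℝ) < 1 := by
    by_contra hc
    push_neg at hc
    nlinarith
  have : (j.val - (3*n+1) : ℕ) = 0 := by exact_mod_cast Nat.lt_one_iff.mp (by exact_mod_cast hd1)
  omega

private lemma redL_of_val_zero (n : ℕ) (j : Fin (4*n+1)) (h : j.val = 0) :
    redL n j = 4*n := by simp [redL, h]

private lemma redL_of_val_ne_zero (n : ℕ) (j : Fin (4*n+1)) (h : j.val ≠ 0) :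
    redL n j = 0 := by simp [redL, h]

private lemma crunch1 (Sr : ℝ) (hSr : 0 < Sr) (A B : ℕ) (hA : 1 ≤ A) (hB : 1 ≤ B)
    (hle : (A:ℝ)*(Sr/4) + (B:ℝ)*(Sr/8) ≤ Sr/8) : False := by
  have h1 : (1:ℝ) ≤ (A:ℝ) := by exact_mod_cast hA
  have h2 : (1:ℝ) ≤ (B:ℝ) := by exact_mod_cast hB
  have h1' : Sr/4 ≤ (A:ℝ)*(Sr/4) := le_mul_of_one_le_left (by positivity) h1
  have h2' : Sr/8 ≤ (B:ℝ)*(Sr/8) := le_mul_of_one_le_left (by positivity) h2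
  linarith

private lemma crunch2 (Sr : ℝ) (hSr : 0 < Sr) (A B : ℕ) (hB : 2 ≤ B)
    (hle : (A:ℝ)*(Sr/4) + (B:ℝ)*(Sr/8) ≤ Sr/8) : False := by
  have h3 : (2:ℝ) ≤ (B:ℝ) := by exact_mod_cast hB
  have h1 : (0:ℝ) ≤ (A:ℝ)*(Sr/4) := by positivity
  have h3' : (2:ℝ)*(Sr/8) ≤ (B:ℝ)*(Sr/8) := mul_le_mul_of_nonneg_right h3 (by positivity)
  linarith

end AuxLemmas


set_option maxHeartbeats 4000000 in
/-- **No worker besides worker `P` sends any task.**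
In the reduction instance, in any valid schedule that completes all `4n` tasks
within the deadline `T = E + nS + S/4`, every worker→master transfer originates
from worker `P` (worker `0`). -/
theorem only_worker_P_sends
    (n S : ℕ) (hS : 0 < S) (hn : 0 < n) (y : Fin (3*n) → ℕ)
    (hy : ∀ i, S < 4 * y i ∧ 2 * y i < S)
    (σ : StarSchedule (4*n+1) (redC n S y) (redW n S) (redL n))
    (hσ : FinishesBy σ (redT n S)) :
    ∀ k : Fin σ.nRecv, σ.rsrc k = ⟨0, by omega⟩ := by
  classical
  have hS0 : (0:ℝ) < (S:ℝ) := by exact_mod_cast hS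
  have hy1 : ∀ i, S < 4 * y i := fun i => (hy i).1
  intro k0
  by_contra hk0
  set z : Fin (4*n+1) := ⟨0, by omega⟩ with hz_def
  have hk0v : (σ.rsrc k0).val ≠ 0 := fun h => hk0 (Fin.ext h)
  have hTval : redT n S = ((n:ℝ)+1) * (S:ℝ) + (n:ℝ) * (S:ℝ) + (S:ℝ)/4 := rfl
  -- every processing is on a nonzero worker
  have hw0 : ∀ p, (σ.pw p).val ≠ 0 := by
    intro p hp0
    have h := hσ p
    rw [redW_of_val_zero n S _ hp0] at h
    have := σ.pstart_nonneg p
    linarith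
  have hwge : ∀ p, ((n:ℝ)+1) * (S:ℝ) ≤ redW n S (σ.pw p) :=
    fun p => redW_ge n S _ (hw0 p)
  -- pw injective
  have hpinj : Function.Injective σ.pw := by
    intro p q hpq
    by_contra hne
    have h1 := hσ p
    have h2 := hσ q
    have h3 := σ.pstart_nonneg p
    have h4 := σ.pstart_nonneg q
    have hgep := hwge p
    have hgeq := hwge q
    rw [hTval] at h1 h2
    have hww : redW n S (σ.pw q) = redW n S (σ.pw p) := by rw [hpq]
    rcases σ.proc_seq p q hne hpq with h | h
    · rw [hww] at h2 hgeq; linarith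
    · rw [hww] at h2 hgeq; linarith
  -- number of processings
  have hnP : σ.nProc = 4*n := by
    have h := σ.all_processed
    have hsum : (∑ i : Fin (4*n+1), redL n i) = 4*n := by
      have hL : ∀ i : Fin (4*n+1), redL n i = if i = z then 4*n else 0 := by
        intro i
        by_cases hi : i = z
        · subst hi; rw [redL_of_val_zero n z rfl]; simp
        · have hv : i.val ≠ 0 := fun hv => hi (Fin.ext hv)
          simp [redL, hv, hi]
      calc (∑ i : Fin (4*n+1), redL n i)
          = ∑ i : Fin (4*n+1), if i = z then 4*n else 0 :=
            Finset.sum_congr rfl (fun i _ => hL i)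
        _ = 4*n := by simp
    rw [h, hsum]
  -- fiber bijection for processings
  have hcard_sub : Fintype.card {j : Fin (4*n+1) // j.val ≠ 0} = 4*n := by
    have h1 : Fintype.card {j : Fin (4*n+1) // j.val = 0} = 1 := by
      rw [Fintype.card_subtype]
      rw [show (Finset.univ.filter fun j : Fin (4*n+1) => j.val = 0) = {z} from ?_]
      · simp
      · ext j
        simp only [Finset.mem_filter, Finset.mem_univ, true_and, Finset.mem_singleton]
        exact ⟨fun h => Fin.ext h, fun h => by rw [h]⟩
    calc Fintype.card {j : Fin (4*n+1) // j.val ≠ 0}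
        = Fintype.card (Fin (4*n+1)) - Fintype.card {j : Fin (4*n+1) // j.val = 0} :=
          Fintype.card_subtype_compl _
      _ = 4*n := by rw [h1, Fintype.card_fin]; omega
  have hbij : Function.Bijective
      (fun p : Fin σ.nProc => (⟨σ.pw p, hw0 p⟩ : {j : Fin (4*n+1) // j.val ≠ 0})) := by
    rw [Fintype.bijective_iff_injective_and_card]
    exact ⟨fun p q h => hpinj (congrArg Subtype.val h), by
      rw [hcard_sub, Fintype.card_fin, hnP]⟩
  have hpex : ∀ j : Fin (4*n+1), j.val ≠ 0 → ∃ p, σ.pw p = j := by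
    intro j hj
    obtain ⟨p, hp⟩ := hbij.2 ⟨j, hj⟩
    exact ⟨p, congrArg Subtype.val hp⟩
  -- the big time
  set tb : ℝ := (∑ k, (σ.sstart k + redC n S y (σ.sdst k))) +
      ((∑ k, (σ.rstart k + redC n S y (σ.rsrc k))) + (∑ p, σ.pstart p)) with htb_def
  have hsnn : ∀ k : Fin σ.nSend, 0 ≤ σ.sstart k + redC n S y (σ.sdst k) :=
    fun k => add_nonneg (σ.sstart_nonneg k) (redC_pos n S y hS _).le
  have hrnn : ∀ k : Fin σ.nRecv, 0 ≤ σ.rstart k + redC n S y (σ.rsrc k) :=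
    fun k => add_nonneg (σ.rstart_nonneg k) (redC_pos n S y hS _).le
  have hsum_s_nn : 0 ≤ ∑ k, (σ.sstart k + redC n S y (σ.sdst k)) :=
    Finset.sum_nonneg (fun k _ => hsnn k)
  have hsum_r_nn : 0 ≤ ∑ k, (σ.rstart k + redC n S y (σ.rsrc k)) :=
    Finset.sum_nonneg (fun k _ => hrnn k)
  have hsum_p_nn : 0 ≤ ∑ p, σ.pstart p :=
    Finset.sum_nonneg (fun p _ => σ.pstart_nonneg p)
  have htb_s : ∀ k, σ.sstart k + redC n S y (σ.sdst k) ≤ tb := by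
    intro k
    have h := Finset.single_le_sum (f := fun k => σ.sstart k + redC n S y (σ.sdst k))
      (fun i _ => hsnn i) (Finset.mem_univ k)
    have h2 : σ.sstart k + redC n S y (σ.sdst k) ≤
        ∑ x : Fin σ.nSend, (σ.sstart x + redC n S y (σ.sdst x)) := h
    rw [htb_def]; linarith
  have htb_r : ∀ k, σ.rstart k + redC n S y (σ.rsrc k) ≤ tb := by
    intro k
    have h := Finset.single_le_sum (f := fun k => σ.rstart k + redC n S y (σ.rsrc k))
      (fun i _ => hrnn i) (Finset.mem_univ k)
    have h2 : σ.rstart k + redC n S y (σ.rsrc k) ≤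
        ∑ x : Fin σ.nRecv, (σ.rstart x + redC n S y (σ.rsrc x)) := h
    rw [htb_def]; linarith
  have htb_p : ∀ p, σ.pstart p ≤ tb := by
    intro p
    have h := Finset.single_le_sum (f := fun p => σ.pstart p)
      (fun i _ => σ.pstart_nonneg i) (Finset.mem_univ p)
    have h2 : σ.pstart p ≤ ∑ x : Fin σ.nProc, σ.pstart x := h
    rw [htb_def]; linarith
  have htb_s' : ∀ k, σ.sstart k ≤ tb := by
    intro k
    have := htb_s k
    have := (redC_pos n S y hS (σ.sdst k))
    linarith
  have htb_r' : ∀ k, σ.rstart k ≤ tb := by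
    intro k
    have := htb_r k
    have := (redC_pos n S y hS (σ.rsrc k))
    linarith
  -- saturation of filters at tb
  have hRSsat : ∀ j : Fin (4*n+1),
      (Finset.univ.filter fun k => σ.rsrc k = j ∧ σ.rstart k ≤ tb) =
      (Finset.univ.filter fun k => σ.rsrc k = j) := by
    intro j
    ext k
    simp only [Finset.mem_filter, Finset.mem_univ, true_and]
    exact ⟨fun h => h.1, fun h => ⟨h, htb_r' k⟩⟩
  have hSCsat : ∀ j : Fin (4*n+1),
      (Finset.univ.filter fun k => σ.sdst k = j ∧ σ.sstart k + redC n S y (σ.sdst k) ≤ tb) =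
      (Finset.univ.filter fun k => σ.sdst k = j) := by
    intro j
    ext k
    simp only [Finset.mem_filter, Finset.mem_univ, true_and]
    exact ⟨fun h => h.1, fun h => ⟨h, htb_s k⟩⟩
  have hPSsat : ∀ j : Fin (4*n+1),
      (Finset.univ.filter fun p => σ.pw p = j ∧ σ.pstart p ≤ tb) =
      (Finset.univ.filter fun p => σ.pw p = j) := by
    intro j
    ext p
    simp only [Finset.mem_filter, Finset.mem_univ, true_and]
    exact ⟨fun h => h.1, fun h => ⟨h, htb_p p⟩⟩
  have hSSsat : (Finset.univ.filter fun k : Fin σ.nSend => σ.sstart k ≤ tb) = Finset.univ :=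
    Finset.filter_true_of_mem (fun k _ => htb_s' k)
  -- fiberwise counting
  have hRfib : σ.nRecv = ∑ j : Fin (4*n+1), (Finset.univ.filter fun k => σ.rsrc k = j).card := by
    have h := Finset.card_eq_sum_card_fiberwise
      (s := (Finset.univ : Finset (Fin σ.nRecv))) (t := Finset.univ) (f := σ.rsrc)
      (fun x _ => Finset.mem_univ _)
    simpa using h
  have hSfib : σ.nSend = ∑ j : Fin (4*n+1), (Finset.univ.filter fun k => σ.sdst k = j).card := by
    have h := Finset.card_eq_sum_card_fiberwise
      (s := (Finset.univ : Finset (Fin σ.nSend))) (t := Finset.univ) (f := σ.sdst)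
      (fun x _ => Finset.mem_univ _)
    simpa using h
  have hPfib : σ.nProc = ∑ j : Fin (4*n+1), (Finset.univ.filter fun p => σ.pw p = j).card := by
    have h := Finset.card_eq_sum_card_fiberwise
      (s := (Finset.univ : Finset (Fin σ.nProc))) (t := Finset.univ) (f := σ.pw)
      (fun x _ => Finset.mem_univ _)
    simpa using h
  have hLsum : (∑ j : Fin (4*n+1), redL n j) = 4*n := by
    have := σ.all_processed
    omega
  -- N ≤ R
  have hNleR : σ.nSend ≤ σ.nRecv := by
    have h := σ.master_avail tb
    rw [hSSsat] at h
    have h2 := Finset.card_filter_le (Finset.univ : Finset (Fin σ.nRecv))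
      (fun k => σ.rstart k + redC n S y (σ.rsrc k) ≤ tb)
    simp only [Finset.card_univ, Fintype.card_fin] at h h2
    omega
  -- R ≤ N
  have hsum_wa :
      (∑ j : Fin (4*n+1),
        ((Finset.univ.filter fun k => σ.rsrc k = j ∧ σ.rstart k ≤ tb).card +
          (Finset.univ.filter fun p => σ.pw p = j ∧ σ.pstart p ≤ tb).card)) ≤
      ∑ j : Fin (4*n+1),
        (redL n j +
          (Finset.univ.filter fun k => σ.sdst k = j ∧ σ.sstart k + redC n S y (σ.sdst k) ≤ tb).card) :=
    Finset.sum_le_sum (fun j _ => σ.worker_avail j tb)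
  have hLHS :
      (∑ j : Fin (4*n+1),
        ((Finset.univ.filter fun k => σ.rsrc k = j ∧ σ.rstart k ≤ tb).card +
          (Finset.univ.filter fun p => σ.pw p = j ∧ σ.pstart p ≤ tb).card)) =
      σ.nRecv + σ.nProc := by
    have e1 : (∑ j : Fin (4*n+1), (Finset.univ.filter fun k => σ.rsrc k = j ∧ σ.rstart k ≤ tb).card) =
        ∑ j : Fin (4*n+1), (Finset.univ.filter fun k => σ.rsrc k = j).card :=
      Finset.sum_congr rfl (fun j _ => by rw [hRSsat j])
    have e2 : (∑ j : Fin (4*n+1), (Finset.univ.filter fun p => σ.pw p = j ∧ σ.pstart p ≤ tb).card) =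
        ∑ j : Fin (4*n+1), (Finset.univ.filter fun p => σ.pw p = j).card :=
      Finset.sum_congr rfl (fun j _ => by rw [hPSsat j])
    rw [Finset.sum_add_distrib, e1, e2, ← hRfib, ← hPfib]
  have hRHS :
      (∑ j : Fin (4*n+1),
        (redL n j +
          (Finset.univ.filter fun k => σ.sdst k = j ∧ σ.sstart k + redC n S y (σ.sdst k) ≤ tb).card)) =
      4*n + σ.nSend := by
    have e3 : (∑ j : Fin (4*n+1), (Finset.univ.filter fun k => σ.sdst k = j ∧ σ.sstart k + redC n S y (σ.sdst k) ≤ tb).card) =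
        ∑ j : Fin (4*n+1), (Finset.univ.filter fun k => σ.sdst k = j).card :=
      Finset.sum_congr rfl (fun j _ => by rw [hSCsat j])
    rw [Finset.sum_add_distrib, hLsum, e3, ← hSfib]
  have hRleN : σ.nRecv ≤ σ.nSend := by
    rw [hLHS, hRHS, hnP] at hsum_wa
    omega
  have hNR : σ.nSend = σ.nRecv := le_antisymm hNleR hRleN
  -- per-worker equalities
  have hWeq : ∀ j : Fin (4*n+1),
      (Finset.univ.filter fun k => σ.rsrc k = j ∧ σ.rstart k ≤ tb).card +
        (Finset.univ.filter fun p => σ.pw p = j ∧ σ.pstart p ≤ tb).card =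
      redL n j +
        (Finset.univ.filter fun k => σ.sdst k = j ∧ σ.sstart k + redC n S y (σ.sdst k) ≤ tb).card := by
    intro j
    by_contra hne
    have hlt := lt_of_le_of_ne (σ.worker_avail j tb) hne
    have hstrict := Finset.sum_lt_sum (fun i (_ : i ∈ Finset.univ) => σ.worker_avail i tb)
      ⟨j, Finset.mem_univ j, hlt⟩
    rw [hLHS, hRHS, hnP] at hstrict
    omega
  -- processing fibers
  have hPW1 : ∀ j : Fin (4*n+1), j.val ≠ 0 →
      (Finset.univ.filter fun p => σ.pw p = j).card = 1 := by
    intro j hj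
    obtain ⟨p, hp⟩ := hpex j hj
    rw [show (Finset.univ.filter fun q => σ.pw q = j) = {p} from ?_]
    · simp
    · ext q
      simp only [Finset.mem_filter, Finset.mem_univ, true_and, Finset.mem_singleton]
      constructor
      · intro h; exact hpinj (h.trans hp.symm)
      · intro h; rw [h, hp]
  have hPW0 : (Finset.univ.filter fun p => σ.pw p = z).card = 0 := by
    rw [Finset.card_eq_zero]
    ext p
    simp only [Finset.mem_filter, Finset.mem_univ, true_and, Finset.notMem_empty, iff_false]
    intro h
    exact hw0 p (by rw [h])
  -- key per-worker equations
  have hRS_SC : ∀ j : Fin (4*n+1), j.val ≠ 0 →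
      (Finset.univ.filter fun k => σ.rsrc k = j).card + 1 =
      (Finset.univ.filter fun k => σ.sdst k = j).card := by
    intro j hj
    have h := hWeq j
    rw [hRSsat j, hSCsat j, hPSsat j, hPW1 j hj, redL_of_val_ne_zero n j hj] at h
    omega
  have hRS0 : (Finset.univ.filter fun k => σ.rsrc k = z).card =
      4*n + (Finset.univ.filter fun k => σ.sdst k = z).card := by
    have h := hWeq z
    rw [hRSsat z, hSCsat z, hPSsat z, hPW0, redL_of_val_zero n z rfl] at h
    omega
  -- the latest send
  have hNpos : 0 < σ.nSend := by
    have : 0 < σ.nRecv := k0.pos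
    omega
  have huniv_ne : (Finset.univ : Finset (Fin σ.nSend)).Nonempty :=
    ⟨⟨0, hNpos⟩, Finset.mem_univ _⟩
  obtain ⟨sstar, -, hsmax⟩ := Finset.exists_max_image Finset.univ σ.sstart huniv_ne
  -- all receptions complete by the start of the latest send
  have hallrc : ∀ k : Fin σ.nRecv,
      σ.rstart k + redC n S y (σ.rsrc k) ≤ σ.sstart sstar := by
    have h := σ.master_avail (σ.sstart sstar)
    have hfull : (Finset.univ.filter fun k : Fin σ.nSend => σ.sstart k ≤ σ.sstart sstar) =
        Finset.univ := Finset.filter_true_of_mem (fun k _ => hsmax k (Finset.mem_univ k))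
    rw [hfull] at h
    simp only [Finset.card_univ, Fintype.card_fin] at h
    have hcle := Finset.card_filter_le (Finset.univ : Finset (Fin σ.nRecv))
      (fun k => σ.rstart k + redC n S y (σ.rsrc k) ≤ σ.sstart sstar)
    simp only [Finset.card_univ, Fintype.card_fin] at hcle
    have huniv2 := Finset.eq_univ_of_card
      (Finset.univ.filter fun k : Fin σ.nRecv =>
        σ.rstart k + redC n S y (σ.rsrc k) ≤ σ.sstart sstar)
      (by rw [Fintype.card_fin]; omega)
    intro k
    have hk : k ∈ Finset.univ.filter fun k : Fin σ.nRecv =>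
        σ.rstart k + redC n S y (σ.rsrc k) ≤ σ.sstart sstar := by
      rw [huniv2]; exact Finset.mem_univ k
    exact (Finset.mem_filter.mp hk).2
  have hsum_le : (∑ k : Fin σ.nRecv, redC n S y (σ.rsrc k)) ≤ σ.sstart sstar :=
    sum_len_le Finset.univ σ.rstart (fun k => redC n S y (σ.rsrc k)) _
      (σ.sstart_nonneg sstar)
      (fun k _ => σ.rstart_nonneg k) (fun k _ => redC_pos n S y hS _)
      (fun k _ j _ hkj => σ.oneport_in k j hkj) (fun k _ => hallrc k)
  -- splitting receptions
  have hsplitsum : (∑ k ∈ Finset.univ.filter (fun k : Fin σ.nRecv => (σ.rsrc k).val = 0),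
        redC n S y (σ.rsrc k)) +
      (∑ k ∈ Finset.univ.filter (fun k : Fin σ.nRecv => ¬ (σ.rsrc k).val = 0),
        redC n S y (σ.rsrc k)) =
      ∑ k : Fin σ.nRecv, redC n S y (σ.rsrc k) :=
    Finset.sum_filter_add_sum_filter_not _ _ _
  have hF0z : (Finset.univ.filter fun k : Fin σ.nRecv => (σ.rsrc k).val = 0) =
      Finset.univ.filter fun k => σ.rsrc k = z := by
    ext k
    simp only [Finset.mem_filter, Finset.mem_univ, true_and]
    exact ⟨fun h => Fin.ext h, fun h => by rw [h]⟩
  have hF0sum : (∑ k ∈ Finset.univ.filter (fun k : Fin σ.nRecv => (σ.rsrc k).val = 0),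
        redC n S y (σ.rsrc k)) =
      ((Finset.univ.filter fun k : Fin σ.nRecv => (σ.rsrc k).val = 0).card : ℝ) * ((S:ℝ)/4) := by
    rw [Finset.sum_congr rfl (fun k hk =>
      redC_of_val_zero n S y (σ.rsrc k) (Finset.mem_filter.mp hk).2)]
    rw [Finset.sum_const, nsmul_eq_mul]
  have hFnsum : ((Finset.univ.filter fun k : Fin σ.nRecv => ¬ (σ.rsrc k).val = 0).card : ℝ) *
        ((S:ℝ)/8) ≤
      ∑ k ∈ Finset.univ.filter (fun k : Fin σ.nRecv => ¬ (σ.rsrc k).val = 0),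
        redC n S y (σ.rsrc k) := by
    have h := Finset.card_nsmul_le_sum
      (Finset.univ.filter fun k : Fin σ.nRecv => ¬ (σ.rsrc k).val = 0)
      (fun k => redC n S y (σ.rsrc k)) ((S:ℝ)/8) (fun k _ => redC_ge_eighth n S y _)
    simpa [nsmul_eq_mul] using h
  have hk0Fn : k0 ∈ Finset.univ.filter fun k : Fin σ.nRecv => ¬ (σ.rsrc k).val = 0 := by
    simp only [Finset.mem_filter, Finset.mem_univ, true_and]; exact hk0v
  have hF0card : (Finset.univ.filter fun k : Fin σ.nRecv => (σ.rsrc k).val = 0).card =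
      4*n + (Finset.univ.filter fun k => σ.sdst k = z).card := by
    rw [hF0z]; exact hRS0
  -- the destination of the latest send is a nonzero worker
  have hjs0 : (σ.sdst sstar).val ≠ 0 := by
    intro h0
    have hjz : σ.sdst sstar = z := Fin.ext h0
    have hne0 : (Finset.univ.filter fun k : Fin σ.nRecv => (σ.rsrc k).val = 0).Nonempty := by
      rw [← Finset.card_pos, hF0card]; omega
    obtain ⟨k1, hk1F, hk1max⟩ := Finset.exists_max_image _ σ.rstart hne0
    have hwa := σ.worker_avail z (σ.rstart k1)
    have hRSfull : (Finset.univ.filter fun k => σ.rsrc k = z ∧ σ.rstart k ≤ σ.rstart k1) =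
        Finset.univ.filter fun k : Fin σ.nRecv => (σ.rsrc k).val = 0 := by
      ext k
      simp only [Finset.mem_filter, Finset.mem_univ, true_and]
      constructor
      · intro h; rw [h.1]
      · intro h
        exact ⟨Fin.ext h, hk1max k (Finset.mem_filter.mpr ⟨Finset.mem_univ k, h⟩)⟩
    rw [hRSfull, redL_of_val_zero n z rfl] at hwa
    have hsub : (Finset.univ.filter fun k =>
          σ.sdst k = z ∧ σ.sstart k + redC n S y (σ.sdst k) ≤ σ.rstart k1) ⊆
        Finset.univ.filter fun k => σ.sdst k = z := by
      intro x hx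
      simp only [Finset.mem_filter, Finset.mem_univ, true_and] at hx ⊢
      exact hx.1
    have hcard2 : (Finset.univ.filter fun k => σ.sdst k = z).card ≤
        (Finset.univ.filter fun k =>
          σ.sdst k = z ∧ σ.sstart k + redC n S y (σ.sdst k) ≤ σ.rstart k1).card := by
      rw [hF0card] at hwa
      omega
    have heqf := Finset.eq_of_subset_of_card_le hsub hcard2
    have hsin : sstar ∈ Finset.univ.filter fun k : Fin σ.nSend => σ.sdst k = z := by
      simp [hjz]
    rw [← heqf] at hsin
    have hend := (Finset.mem_filter.mp hsin).2.2
    have h1 := hallrc k1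
    have h2 := redC_pos n S y hS (σ.sdst sstar)
    have h3 := redC_pos n S y hS (σ.rsrc k1)
    linarith
  -- the deadline for the latest send
  obtain ⟨pstar, hpws⟩ := hpex (σ.sdst sstar) hjs0
  have hdl : σ.sstart sstar + redC n S y (σ.sdst sstar) + redW n S (σ.sdst sstar) ≤ redT n S := by
    set Tset : Finset ℝ := insert (σ.pstart pstar)
      ((Finset.univ.filter fun k => σ.rsrc k = σ.sdst sstar).image σ.rstart) with hTset_def
    have hTne : Tset.Nonempty := ⟨σ.pstart pstar, Finset.mem_insert_self _ _⟩
    set t1 : ℝ := Tset.max' hTne with ht1_def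
    have hp1 : σ.pstart pstar ≤ t1 := Finset.le_max' _ _ (Finset.mem_insert_self _ _)
    have hr1 : ∀ k ∈ Finset.univ.filter fun k => σ.rsrc k = σ.sdst sstar,
        σ.rstart k ≤ t1 := fun k hk =>
      Finset.le_max' _ _ (Finset.mem_insert_of_mem (Finset.mem_image_of_mem _ hk))
    have ht1tb : t1 ≤ tb := by
      apply Finset.max'_le
      intro x hx
      rcases Finset.mem_insert.mp hx with h | h
      · rw [h]; exact htb_p pstar
      · obtain ⟨k, -, hk⟩ := Finset.mem_image.mp h
        rw [← hk]; exact htb_r' k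
    have hwa := σ.worker_avail (σ.sdst sstar) t1
    have hRSfull : (Finset.univ.filter fun k => σ.rsrc k = σ.sdst sstar ∧ σ.rstart k ≤ t1) =
        Finset.univ.filter fun k => σ.rsrc k = σ.sdst sstar := by
      ext k
      simp only [Finset.mem_filter, Finset.mem_univ, true_and]
      exact ⟨fun h => h.1, fun h => ⟨h, hr1 k (by simp [h])⟩⟩
    have hPS1' : 1 ≤ (Finset.univ.filter fun p => σ.pw p = σ.sdst sstar ∧ σ.pstart p ≤ t1).card := by
      have : pstar ∈ Finset.univ.filter fun p => σ.pw p = σ.sdst sstar ∧ σ.pstart p ≤ t1 := by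
        simp [hpws, hp1]
      exact Finset.card_pos.mpr ⟨pstar, this⟩
    rw [hRSfull, redL_of_val_ne_zero n _ hjs0] at hwa
    have hsub : (Finset.univ.filter fun k =>
          σ.sdst k = σ.sdst sstar ∧ σ.sstart k + redC n S y (σ.sdst k) ≤ t1) ⊆
        Finset.univ.filter fun k => σ.sdst k = σ.sdst sstar := by
      intro x hx
      simp only [Finset.mem_filter, Finset.mem_univ, true_and] at hx ⊢
      exact hx.1
    have hSCtot := hRS_SC (σ.sdst sstar) hjs0
    have hcard2 : (Finset.univ.filter fun k => σ.sdst k = σ.sdst sstar).card ≤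
        (Finset.univ.filter fun k =>
          σ.sdst k = σ.sdst sstar ∧ σ.sstart k + redC n S y (σ.sdst k) ≤ t1).card := by
      omega
    have heqf := Finset.eq_of_subset_of_card_le hsub hcard2
    have hsin : sstar ∈ Finset.univ.filter fun k : Fin σ.nSend => σ.sdst k = σ.sdst sstar := by
      simp
    rw [← heqf] at hsin
    have hend := (Finset.mem_filter.mp hsin).2.2
    -- t1 is either the processing start or some reception start
    have ht1mem := Tset.max'_mem hTne
    rw [← ht1_def] at ht1mem
    rcases Finset.mem_insert.mp ht1mem with h | h
    · -- t1 = pstart pstar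
      have hfin := hσ pstar
      rw [hpws] at hfin
      rw [h] at hend
      linarith
    · exfalso
      obtain ⟨k, -, hk⟩ := Finset.mem_image.mp h
      have h1 := hallrc k
      have h2 := redC_pos n S y hS (σ.sdst sstar)
      have h3 := redC_pos n S y hS (σ.rsrc k)
      rw [hk] at h1
      linarith
  -- numeric crunch: no send to worker 0, exactly one nonzero reception
  have hFnC1 : 1 ≤ (Finset.univ.filter fun k : Fin σ.nRecv => ¬ (σ.rsrc k).val = 0).card :=
    Finset.card_pos.mpr ⟨k0, hk0Fn⟩
  have hwge_star : ((n:ℝ)+1) * (S:ℝ) ≤ redW n S (σ.sdst sstar) := redW_ge n S _ hjs0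
  have hcge_star := redC_ge_eighth n S y (σ.sdst sstar)
  have hkey : (((Finset.univ.filter fun k => σ.sdst k = z).card : ℝ)) * ((S:ℝ)/4) +
      (((Finset.univ.filter fun k : Fin σ.nRecv => ¬ (σ.rsrc k).val = 0).card : ℝ)) * ((S:ℝ)/8) ≤
      (S:ℝ)/8 := by
    have h3 := hF0sum
    rw [hF0card] at h3
    have h5 := hdl
    rw [hTval] at h5
    push_cast at h3
    nlinarith [hsum_le, hsplitsum, hFnsum, hwge_star, hcge_star]
  have hSC0_0 : (Finset.univ.filter fun k => σ.sdst k = z).card = 0 := by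
    by_contra h
    exact crunch1 (S:ℝ) hS0 _ _ (Nat.one_le_iff_ne_zero.mpr h) hFnC1 hkey
  have hFnC_1 : (Finset.univ.filter fun k : Fin σ.nRecv => ¬ (σ.rsrc k).val = 0).card = 1 := by
    by_contra h
    exact crunch2 (S:ℝ) hS0 _ _ (by omega) hkey
  have hFneq : (Finset.univ.filter fun k : Fin σ.nRecv => ¬ (σ.rsrc k).val = 0) = {k0} := by
    obtain ⟨x, hxeq⟩ := Finset.card_eq_one.mp hFnC_1
    have hk0x : k0 = x := Finset.mem_singleton.mp (hxeq ▸ hk0Fn)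
    rw [hxeq, hk0x]
  have hrsrci : ∀ k : Fin σ.nRecv, (σ.rsrc k).val ≠ 0 → k = k0 := by
    intro k hk
    have hmem : k ∈ Finset.univ.filter fun k : Fin σ.nRecv => ¬ (σ.rsrc k).val = 0 :=
      Finset.mem_filter.mpr ⟨Finset.mem_univ k, hk⟩
    rw [hFneq] at hmem
    exact Finset.mem_singleton.mp hmem
  have hRcard : σ.nRecv = 4*n + 1 := by
    have h := Finset.card_filter_add_card_filter_not
      (s := (Finset.univ : Finset (Fin σ.nRecv))) (p := fun k => (σ.rsrc k).val = 0)
    rw [hF0card, hSC0_0, hFnC_1] at h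
    simp only [Finset.card_univ, Fintype.card_fin] at h
    omega
  -- total reception length
  have hsumc : (∑ k : Fin σ.nRecv, redC n S y (σ.rsrc k)) =
      (n:ℝ)*(S:ℝ) + redC n S y (σ.rsrc k0) := by
    rw [← hsplitsum, hFneq, Finset.sum_singleton]
    rw [hF0sum, hF0card, hSC0_0]
    have hc : ((4*n+0 : ℕ):ℝ) = 4*(n:ℝ) := by norm_num
    rw [hc]
    ring
  have htstar_ge : (n:ℝ)*(S:ℝ) + redC n S y (σ.rsrc k0) ≤ σ.sstart sstar := by
    rw [← hsumc]; exact hsum_le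
  have hci_cj : redC n S y (σ.rsrc k0) + redC n S y (σ.sdst sstar) ≤ (S:ℝ)/4 := by
    have h5 := hdl
    rw [hTval] at h5
    nlinarith [hwge_star, htstar_ge]
  have hci : redC n S y (σ.rsrc k0) = (S:ℝ)/8 :=
    le_antisymm (by linarith [redC_ge_eighth n S y (σ.sdst sstar)]) (redC_ge_eighth n S y _)
  have hcj : redC n S y (σ.sdst sstar) = (S:ℝ)/8 :=
    le_antisymm (by linarith [redC_ge_eighth n S y (σ.rsrc k0)]) (redC_ge_eighth n S y _)
  have hiQ : 3*n < (σ.rsrc k0).val := redC_le_eighth_Q n S y hS hy1 _ hci.le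
  have hjQ : 3*n < (σ.sdst sstar).val := redC_le_eighth_Q n S y hS hy1 _ hcj.le
  have htstar_le : σ.sstart sstar ≤ (n:ℝ)*(S:ℝ) + (S:ℝ)/8 := by
    have h5 := hdl
    rw [hTval, hcj] at h5
    nlinarith [hwge_star]
  have htstar_eq : σ.sstart sstar = (n:ℝ)*(S:ℝ) + (S:ℝ)/8 := by
    rw [hci] at htstar_ge
    exact le_antisymm htstar_le htstar_ge
  have hwj_le : redW n S (σ.sdst sstar) ≤ ((n:ℝ)+1)*(S:ℝ) := by
    have h5 := hdl
    rw [hTval, hcj, htstar_eq] at h5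
    nlinarith
  have hjval : (σ.sdst sstar).val = 3*n+1 :=
    redW_Q_small n S hS _ hjQ (by linarith)
  have hu_le : σ.rstart k0 ≤ (n:ℝ)*(S:ℝ) := by
    have h := hallrc k0
    rw [hci, htstar_eq] at h
    linarith
  -- the second-latest send
  have hNcard : σ.nSend = 4*n + 1 := by rw [hNR, hRcard]
  have hE2ne : (Finset.univ.erase sstar : Finset (Fin σ.nSend)).Nonempty := by
    rw [← Finset.card_pos, Finset.card_erase_of_mem (Finset.mem_univ sstar)]
    simp only [Finset.card_univ, Fintype.card_fin]
    omega
  obtain ⟨s2, hs2E, hs2max⟩ := Finset.exists_max_image _ σ.sstart hE2ne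
  have hs2ne : s2 ≠ sstar := Finset.ne_of_mem_erase hs2E
  have hend2_le : σ.sstart s2 + redC n S y (σ.sdst s2) ≤ σ.sstart sstar := by
    rcases σ.oneport_out s2 sstar hs2ne with h | h
    · exact h
    · exfalso
      have h1 := hsmax s2 (Finset.mem_univ s2)
      have h2 := redC_pos n S y hS (σ.sdst sstar)
      linarith
  -- at least 4n receptions complete by the start of s2
  have hGcard : 4*n ≤ (Finset.univ.filter fun k : Fin σ.nRecv =>
      σ.rstart k + redC n S y (σ.rsrc k) ≤ σ.sstart s2).card := by
    have h := σ.master_avail (σ.sstart s2)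
    have hsub : Finset.univ.erase sstar ⊆
        Finset.univ.filter fun k : Fin σ.nSend => σ.sstart k ≤ σ.sstart s2 := by
      intro x hx
      exact Finset.mem_filter.mpr ⟨Finset.mem_univ x, hs2max x hx⟩
    have h2 := Finset.card_le_card hsub
    rw [Finset.card_erase_of_mem (Finset.mem_univ sstar)] at h2
    simp only [Finset.card_univ, Fintype.card_fin] at h2
    omega
  have hGsum_le : (∑ k ∈ Finset.univ.filter (fun k : Fin σ.nRecv =>
      σ.rstart k + redC n S y (σ.rsrc k) ≤ σ.sstart s2), redC n S y (σ.rsrc k)) ≤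
      σ.sstart s2 :=
    sum_len_le _ σ.rstart _ _ (σ.sstart_nonneg s2)
      (fun k _ => σ.rstart_nonneg k) (fun k _ => redC_pos n S y hS _)
      (fun k _ j _ hkj => σ.oneport_in k j hkj)
      (fun k hk => (Finset.mem_filter.mp hk).2)
  have hcub : ∀ k : Fin σ.nRecv, redC n S y (σ.rsrc k) ≤ (S:ℝ)/4 := by
    intro k
    by_cases h : (σ.rsrc k).val = 0
    · rw [redC_of_val_zero n S y _ h]
    · rw [hrsrci k h, hci]
      linarith
  have hGsum_ge : (n:ℝ)*(S:ℝ) + (S:ℝ)/8 - (S:ℝ)/4 ≤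
      ∑ k ∈ Finset.univ.filter (fun k : Fin σ.nRecv =>
        σ.rstart k + redC n S y (σ.rsrc k) ≤ σ.sstart s2), redC n S y (σ.rsrc k) := by
    have hsd := Finset.sum_sdiff (f := fun k => redC n S y (σ.rsrc k))
      (Finset.filter_subset (fun k : Fin σ.nRecv =>
        σ.rstart k + redC n S y (σ.rsrc k) ≤ σ.sstart s2) Finset.univ)
    have hcard_sd : (Finset.univ \ Finset.univ.filter (fun k : Fin σ.nRecv =>
        σ.rstart k + redC n S y (σ.rsrc k) ≤ σ.sstart s2)).card ≤ 1 := by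
      rw [Finset.card_sdiff_of_subset (Finset.filter_subset _ _)]
      simp only [Finset.card_univ, Fintype.card_fin]
      omega
    have hsd_le : (∑ k ∈ Finset.univ \ Finset.univ.filter (fun k : Fin σ.nRecv =>
        σ.rstart k + redC n S y (σ.rsrc k) ≤ σ.sstart s2), redC n S y (σ.rsrc k)) ≤
        (S:ℝ)/4 := by
      have h := Finset.sum_le_card_nsmul
        (Finset.univ \ Finset.univ.filter (fun k : Fin σ.nRecv =>
          σ.rstart k + redC n S y (σ.rsrc k) ≤ σ.sstart s2))
        (fun k => redC n S y (σ.rsrc k)) ((S:ℝ)/4) (fun k _ => hcub k)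
      rw [nsmul_eq_mul] at h
      have hc1 : ((Finset.univ \ Finset.univ.filter (fun k : Fin σ.nRecv =>
          σ.rstart k + redC n S y (σ.rsrc k) ≤ σ.sstart s2)).card : ℝ) ≤ 1 := by
        exact_mod_cast hcard_sd
      have h2 : ((Finset.univ \ Finset.univ.filter (fun k : Fin σ.nRecv =>
          σ.rstart k + redC n S y (σ.rsrc k) ≤ σ.sstart s2)).card : ℝ) * ((S:ℝ)/4) ≤
          1 * ((S:ℝ)/4) := mul_le_mul_of_nonneg_right hc1 (by positivity)
      linarith
    have hall : (∑ k : Fin σ.nRecv, redC n S y (σ.rsrc k)) = (n:ℝ)*(S:ℝ) + (S:ℝ)/8 := by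
      rw [hsumc, hci]
    linarith
  have ht2_ge : (n:ℝ)*(S:ℝ) - (S:ℝ)/8 ≤ σ.sstart s2 := by linarith
  have hcj2_le : redC n S y (σ.sdst s2) ≤ (S:ℝ)/4 := by
    rw [htstar_eq] at hend2_le
    linarith
  have hj20 : (σ.sdst s2).val ≠ 0 := by
    intro h0
    have hmem : s2 ∈ Finset.univ.filter fun k => σ.sdst k = z :=
      Finset.mem_filter.mpr ⟨Finset.mem_univ s2, Fin.ext h0⟩
    have := Finset.card_pos.mpr ⟨s2, hmem⟩
    omega
  have hj2Q : 3*n < (σ.sdst s2).val := by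
    rcases redC_le_quarter_cases n S y hS hy1 _ hcj2_le with h | h
    · exact absurd h hj20
    · exact h
  have hcj2 : redC n S y (σ.sdst s2) = (S:ℝ)/8 := redC_of_Q n S y _ hj2Q
  have hend2s : σ.sstart s2 + (S:ℝ)/8 ≤ σ.sstart sstar := by
    rw [hcj2] at hend2_le
    exact hend2_le
  -- the end of s2 cannot be before the nonzero reception starts
  have hnotend2u : ¬ (σ.sstart s2 + (S:ℝ)/8 ≤ σ.rstart k0) := by
    intro hcon
    have hk0G : k0 ∉ Finset.univ.filter (fun k : Fin σ.nRecv =>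
        σ.rstart k + redC n S y (σ.rsrc k) ≤ σ.sstart s2) := by
      intro hmem
      have h := (Finset.mem_filter.mp hmem).2
      rw [hci] at h
      linarith
    have hsubG : Finset.univ.filter (fun k : Fin σ.nRecv =>
        σ.rstart k + redC n S y (σ.rsrc k) ≤ σ.sstart s2) ⊆ Finset.univ.erase k0 := by
      intro x hx
      exact Finset.mem_erase.mpr ⟨fun he => hk0G (he ▸ hx), Finset.mem_univ x⟩
    have hcardE : (Finset.univ.erase k0 : Finset (Fin σ.nRecv)).card = 4*n := by
      rw [Finset.card_erase_of_mem (Finset.mem_univ k0)]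
      simp only [Finset.card_univ, Fintype.card_fin]
      omega
    have heqG := Finset.eq_of_subset_of_card_le hsubG (by omega)
    have hsumE : (∑ k ∈ Finset.univ.erase k0, redC n S y (σ.rsrc k)) = (n:ℝ)*(S:ℝ) := by
      have h := Finset.add_sum_erase Finset.univ (fun k => redC n S y (σ.rsrc k))
        (Finset.mem_univ k0)
      rw [hsumc] at h
      rw [hci] at h
      linarith
    rw [heqG, hsumE] at hGsum_le
    linarith [hu_le]
  -- reception counts per nonzero worker
  have hRSi : (Finset.univ.filter fun k => σ.rsrc k = σ.rsrc k0).card = 1 := by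
    rw [show (Finset.univ.filter fun k => σ.rsrc k = σ.rsrc k0) = {k0} from ?_]
    · simp
    · ext x
      simp only [Finset.mem_filter, Finset.mem_univ, true_and, Finset.mem_singleton]
      constructor
      · intro h
        exact hrsrci x (by rw [h]; exact hk0v)
      · intro h
        rw [h]
  have hRSo : ∀ j : Fin (4*n+1), j.val ≠ 0 → j ≠ σ.rsrc k0 →
      (Finset.univ.filter fun k => σ.rsrc k = j).card = 0 := by
    intro j hj hji
    rw [Finset.card_eq_zero]
    by_contra h
    obtain ⟨x, hx⟩ := Finset.nonempty_iff_ne_empty.mpr h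
    have hxj := (Finset.mem_filter.mp hx).2
    have hxk0 : x = k0 := hrsrci x (by rw [hxj]; exact hj)
    exact hji (by rw [← hxj, hxk0])
  -- final dichotomy
  by_cases hj2i : σ.sdst s2 = σ.rsrc k0
  · -- s2 is a send to the worker that sends back
    have hSC2 : (Finset.univ.filter fun k => σ.sdst k = σ.rsrc k0).card = 2 := by
      have h := hRS_SC (σ.rsrc k0) hk0v
      rw [hRSi] at h
      omega
    have hwa := σ.worker_avail (σ.rsrc k0) (σ.rstart k0)
    have hRSk : 1 ≤ (Finset.univ.filter fun k =>
        σ.rsrc k = σ.rsrc k0 ∧ σ.rstart k ≤ σ.rstart k0).card :=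
      Finset.card_pos.mpr ⟨k0, Finset.mem_filter.mpr ⟨Finset.mem_univ k0, rfl, le_refl _⟩⟩
    rw [redL_of_val_ne_zero n _ hk0v] at hwa
    have hXne : (Finset.univ.filter fun k =>
        σ.sdst k = σ.rsrc k0 ∧
          σ.sstart k + redC n S y (σ.sdst k) ≤ σ.rstart k0).Nonempty := by
      rw [← Finset.card_pos]
      omega
    obtain ⟨X, hXmem⟩ := hXne
    have hX := (Finset.mem_filter.mp hXmem).2
    have hXcd : σ.sstart X + (S:ℝ)/8 ≤ σ.rstart k0 := by
      have h := hX.2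
      rw [hX.1, hci] at h
      exact h
    have hXs2 : X ≠ s2 := by
      intro he
      rw [he] at hXcd
      exact hnotend2u hXcd
    have hXss : X ≠ sstar := by
      intro he
      rw [he, htstar_eq] at hXcd
      linarith [hu_le]
    obtain ⟨pi, hpi⟩ := hpex (σ.rsrc k0) hk0v
    have hwa3 := σ.worker_avail (σ.rsrc k0) (max (σ.rstart k0) (σ.pstart pi))
    have hRS3 : 1 ≤ (Finset.univ.filter fun k =>
        σ.rsrc k = σ.rsrc k0 ∧ σ.rstart k ≤ max (σ.rstart k0) (σ.pstart pi)).card :=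
      Finset.card_pos.mpr ⟨k0, Finset.mem_filter.mpr
        ⟨Finset.mem_univ k0, rfl, le_max_left _ _⟩⟩
    have hPS3 : 1 ≤ (Finset.univ.filter fun p =>
        σ.pw p = σ.rsrc k0 ∧ σ.pstart p ≤ max (σ.rstart k0) (σ.pstart pi)).card :=
      Finset.card_pos.mpr ⟨pi, Finset.mem_filter.mpr
        ⟨Finset.mem_univ pi, hpi, le_max_right _ _⟩⟩
    rw [redL_of_val_ne_zero n _ hk0v] at hwa3
    have hsub3 : (Finset.univ.filter fun k =>
        σ.sdst k = σ.rsrc k0 ∧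
          σ.sstart k + redC n S y (σ.sdst k) ≤ max (σ.rstart k0) (σ.pstart pi)) ⊆
        Finset.univ.filter fun k => σ.sdst k = σ.rsrc k0 := by
      intro x hx
      simp only [Finset.mem_filter, Finset.mem_univ, true_and] at hx ⊢
      exact hx.1
    have heq3 := Finset.eq_of_subset_of_card_le hsub3 (by omega)
    have hs2mem : s2 ∈ Finset.univ.filter fun k => σ.sdst k = σ.rsrc k0 :=
      Finset.mem_filter.mpr ⟨Finset.mem_univ s2, hj2i⟩
    rw [← heq3] at hs2mem
    have hs2end : σ.sstart s2 + redC n S y (σ.sdst s2) ≤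
        max (σ.rstart k0) (σ.pstart pi) := (Finset.mem_filter.mp hs2mem).2.2
    rw [hcj2] at hs2end
    rcases max_cases (σ.rstart k0) (σ.pstart pi) with ⟨hm, -⟩ | ⟨hm, -⟩
    · rw [hm] at hs2end
      exact hnotend2u hs2end
    · rw [hm] at hs2end
      have hfin := hσ pi
      rw [hpi, hTval] at hfin
      have hwle : redW n S (σ.rsrc k0) ≤ ((n:ℝ)+1)*(S:ℝ) + (S:ℝ)/4 := by linarith
      have hival := redW_Q_small n S hS _ hiQ hwle
      have hij : σ.sdst sstar = σ.rsrc k0 := Fin.ext (by rw [hival, hjval])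
      have hssmem : sstar ∈ Finset.univ.filter fun k => σ.sdst k = σ.rsrc k0 :=
        Finset.mem_filter.mpr ⟨Finset.mem_univ sstar, hij⟩
      have hXmem' : X ∈ Finset.univ.filter fun k => σ.sdst k = σ.rsrc k0 :=
        Finset.mem_filter.mpr ⟨Finset.mem_univ X, hX.1⟩
      have hs2mem' : s2 ∈ Finset.univ.filter fun k => σ.sdst k = σ.rsrc k0 :=
        Finset.mem_filter.mpr ⟨Finset.mem_univ s2, hj2i⟩
      have h3sub : ({X, s2, sstar} : Finset (Fin σ.nSend)) ⊆
          Finset.univ.filter fun k => σ.sdst k = σ.rsrc k0 := by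
        intro x hx
        rcases Finset.mem_insert.mp hx with h | hx2
        · rw [h]; exact hXmem'
        rcases Finset.mem_insert.mp hx2 with h | hx3
        · rw [h]; exact hs2mem'
        · rw [Finset.mem_singleton.mp hx3]; exact hssmem
      have h3card : ({X, s2, sstar} : Finset (Fin σ.nSend)).card = 3 := by
        rw [Finset.card_insert_of_notMem, Finset.card_insert_of_notMem,
          Finset.card_singleton]
        · simp only [Finset.mem_singleton]
          exact hs2ne
        · simp only [Finset.mem_insert, Finset.mem_singleton]
          push_neg
          exact ⟨hXs2, hXss⟩
      have hle3 := Finset.card_le_card h3sub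
      rw [h3card, hSC2] at hle3
      omega
  · -- s2 is the unique send to its destination
    have hSC1 : (Finset.univ.filter fun k => σ.sdst k = σ.sdst s2).card = 1 := by
      have h := hRS_SC (σ.sdst s2) hj20
      rw [hRSo _ hj20 hj2i] at h
      omega
    have hsing : (Finset.univ.filter fun k => σ.sdst k = σ.sdst s2) = {s2} := by
      obtain ⟨x, hx⟩ := Finset.card_eq_one.mp hSC1
      have hmem : s2 ∈ Finset.univ.filter fun k => σ.sdst k = σ.sdst s2 :=
        Finset.mem_filter.mpr ⟨Finset.mem_univ s2, rfl⟩
      rw [hx] at hmem ⊢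
      rw [Finset.mem_singleton.mp hmem]
    obtain ⟨p2, hp2⟩ := hpex (σ.sdst s2) hj20
    have hwa := σ.worker_avail (σ.sdst s2) (σ.pstart p2)
    have hPSp : 1 ≤ (Finset.univ.filter fun p =>
        σ.pw p = σ.sdst s2 ∧ σ.pstart p ≤ σ.pstart p2).card :=
      Finset.card_pos.mpr ⟨p2, Finset.mem_filter.mpr ⟨Finset.mem_univ p2, hp2, le_refl _⟩⟩
    rw [redL_of_val_ne_zero n _ hj20] at hwa
    have hXne : (Finset.univ.filter fun k =>
        σ.sdst k = σ.sdst s2 ∧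
          σ.sstart k + redC n S y (σ.sdst k) ≤ σ.pstart p2).Nonempty := by
      rw [← Finset.card_pos]
      omega
    obtain ⟨X, hXmem⟩ := hXne
    have hX := (Finset.mem_filter.mp hXmem).2
    have hXs2 : X = s2 := by
      have hmem : X ∈ Finset.univ.filter fun k => σ.sdst k = σ.sdst s2 :=
        Finset.mem_filter.mpr ⟨Finset.mem_univ X, hX.1⟩
      rw [hsing] at hmem
      exact Finset.mem_singleton.mp hmem
    have hend_p2 : σ.sstart s2 + (S:ℝ)/8 ≤ σ.pstart p2 := by
      have h := hX.2
      rw [hXs2, hcj2] at h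
      exact h
    have hfin := hσ p2
    rw [hp2, hTval] at hfin
    have hwle : redW n S (σ.sdst s2) ≤ ((n:ℝ)+1)*(S:ℝ) + (S:ℝ)/4 := by linarith
    have hj2val := redW_Q_small n S hS _ hj2Q hwle
    have hj2js : σ.sdst sstar = σ.sdst s2 := Fin.ext (by rw [hj2val, hjval])
    have hssmem : sstar ∈ Finset.univ.filter fun k => σ.sdst k = σ.sdst s2 :=
      Finset.mem_filter.mpr ⟨Finset.mem_univ sstar, hj2js⟩
    rw [hsing] at hssmem
    exact hs2ne (Finset.mem_singleton.mp hssmem).symm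
end
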